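/- arXiv:2002.01615 — 6 statements merged into one kernel-verified Lean document; each statement's English description precedes it below -/
import Mathlib

section
/- Let n, m ≥ 1, let a¹ ∈ ℝ^n and a² ∈ ℝ^m be probability vectors, and let C¹ ∈ ℝ^{n×n}, C² ∈ ℝ^{m×m} be cost matrices. For 1 ≤ i ≤ n define the anchor CDF H¹_i(t) = ∑_{k : C¹_{ik} ≤ t} a¹_k, and for 1 ≤ j ≤ m define H²_j(t) = ∑_{l : C²_{jl} ≤ t} a²_l. Let L = n² + m² and let s_1 ≤ s_2 ≤ … ≤ s_L be all entries of C¹ and C² listed with multiplicity in nondecreasing order. For 1 ≤ l ≤ L−1 set f(l) = ∑_{i=1}^n ∑_{j=1}^m a¹_i a²_j |H¹_i(s_l) − H²_j(s_l)|. Then ∑_{i=1}^n ∑_{j=1}^m a¹_i a²_j · OT₁(i,j) = ∑_{l=1}^{L−1} (s_{l+1} − s_l) f(l), where OT₁(i,j) denotes the infimum over P ∈ U(a¹, a²) of ∑_{k,l} P_{kl} |C¹_{ik} − C²_{jl}|. -/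
open Finset

/-- A probability vector: nonnegative entries summing to 1. -/
def IsProbVec {n : ℕ} (a : Fin n → ℝ) : Prop :=
  (∀ i, 0 ≤ a i) ∧ ∑ i, a i = 1

/-- The transportation polytope `U(a,b)`. -/
def transportPolytope {n m : ℕ} (a : Fin n → ℝ) (b : Fin m → ℝ) :
    Set (Fin n → Fin m → ℝ) :=
  {P | (∀ i j, 0 ≤ P i j) ∧ (∀ i, ∑ j, P i j = a i) ∧ (∀ j, ∑ i, P i j = b j)}

lemma ov_eq {c d x y : ℝ} (hcd : c ≤ d) (hxy : x ≤ y) :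
    max 0 (min d y - max c x) = max c (min d y) - max c (min d x) := by
  simp only [max_def, min_def]; split_ifs <;> linarith

noncomputable def cum {n : ℕ} (w : Fin n → ℝ) (r : ℕ) : ℝ :=
  ∑ k : Fin n, if (k : ℕ) < r then w k else 0

lemma cum_zero {n : ℕ} (w : Fin n → ℝ) : cum w 0 = 0 := by simp [cum]

lemma cum_top {n : ℕ} (w : Fin n → ℝ) : cum w n = ∑ k, w k := by
  simp [cum, Fin.is_lt]

lemma cum_mono {n : ℕ} {w : Fin n → ℝ} (hw : ∀ k, 0 ≤ w k) {r r' : ℕ} (h : r ≤ r') :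
    cum w r ≤ cum w r' := by
  apply Finset.sum_le_sum
  intro k _
  split_ifs with h1 h2 h2
  · exact le_refl _
  · omega
  · exact hw k
  · exact le_refl _

lemma cum_succ {n : ℕ} (w : Fin n → ℝ) (r : Fin n) :
    cum w ((r : ℕ) + 1) = cum w r + w r := by
  unfold cum
  have : ∀ k : Fin n, (if (k : ℕ) < (r : ℕ) + 1 then w k else 0)
      = (if (k : ℕ) < r then w k else 0) + (if k = r then w k else 0) := by
    intro k
    by_cases h : k = r
    · subst h; simp
    · have hne : (k : ℕ) ≠ (r : ℕ) := fun hh => h (Fin.ext hh)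
      by_cases h2 : (k : ℕ) < r
      · simp [h, h2]; omega
      · have : ¬ ((k : ℕ) < (r : ℕ) + 1) := by omega
        simp [h, h2, this]
  rw [Finset.sum_congr rfl (fun k _ => this k), Finset.sum_add_distrib,
    Finset.sum_ite_eq' Finset.univ r w]
  simp

lemma sum_overlap {M : ℕ} (B : ℕ → ℝ) (hBm : ∀ u u' : ℕ, u ≤ u' → B u ≤ B u')
    (hB0 : B 0 = 0) (hBM : B M = 1) {c d : ℝ} (h0 : 0 ≤ c) (hcd : c ≤ d) (h1 : d ≤ 1) :
    ∑ u ∈ Finset.range M, max 0 (min d (B (u + 1)) - max c (B u)) = d - c := by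
  have h : ∀ u ∈ Finset.range M, max 0 (min d (B (u + 1)) - max c (B u))
      = max c (min d (B (u + 1))) - max c (min d (B u)) :=
    fun u _ => ov_eq hcd (hBm u (u + 1) (by omega))
  rw [Finset.sum_congr rfl h, Finset.sum_range_sub (fun u => max c (min d (B u))), hB0, hBM,
    min_eq_left h1, max_eq_right hcd, min_eq_right (le_trans h0 hcd), max_eq_left h0]

lemma monotone_coupling {n m : ℕ} (a1 : Fin n → ℝ) (a2 : Fin m → ℝ)
    (ha1 : IsProbVec a1) (ha2 : IsProbVec a2) (x : Fin n → ℝ) (y : Fin m → ℝ) :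
    ∃ P ∈ transportPolytope a1 a2, ∀ t : ℝ,
      ∑ k, ∑ l, P k l *
        |(if x k ≤ t then (1 : ℝ) else 0) - (if y l ≤ t then (1 : ℝ) else 0)|
      = |(∑ k, if x k ≤ t then a1 k else 0) - (∑ l, if y l ≤ t then a2 l else 0)| := by
  classical
  obtain ⟨ha1n, ha1s⟩ := ha1
  obtain ⟨ha2n, ha2s⟩ := ha2
  set σ := Tuple.sort x with hσ
  set τ := Tuple.sort y with hτ
  have hxm : Monotone (x ∘ σ) := Tuple.monotone_sort x
  have hym : Monotone (y ∘ τ) := Tuple.monotone_sort y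
  set A : ℕ → ℝ := cum (a1 ∘ σ) with hA
  set B : ℕ → ℝ := cum (a2 ∘ τ) with hB
  have hAm : ∀ r r' : ℕ, r ≤ r' → A r ≤ A r' :=
    fun r r' h => cum_mono (fun k => ha1n (σ k)) h
  have hBm : ∀ u u' : ℕ, u ≤ u' → B u ≤ B u' :=
    fun u u' h => cum_mono (fun l => ha2n (τ l)) h
  have hA0 : A 0 = 0 := cum_zero _
  have hB0 : B 0 = 0 := cum_zero _
  have hAn : A n = 1 := by
    rw [hA, cum_top]
    simp only [Function.comp]
    rw [Equiv.sum_comp σ a1, ha1s]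
  have hBm1 : B m = 1 := by
    rw [hB, cum_top]
    simp only [Function.comp]
    rw [Equiv.sum_comp τ a2, ha2s]
  set P : Fin n → Fin m → ℝ := fun k l =>
    max 0 (min (A ((σ.symm k : ℕ) + 1)) (B ((τ.symm l : ℕ) + 1))
      - max (A (σ.symm k : ℕ)) (B (τ.symm l : ℕ))) with hP
  have hPnn : ∀ k l, 0 ≤ P k l := fun k l => le_max_left _ _
  -- row sums
  have hrow : ∀ k, ∑ l, P k l = a1 k := by
    intro k
    rw [← Equiv.sum_comp τ (fun l => P k l)]
    have h1 : ∀ u : Fin m, P k (τ u)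
        = max 0 (min (A ((σ.symm k : ℕ) + 1)) (B ((u : ℕ) + 1))
            - max (A (σ.symm k : ℕ)) (B (u : ℕ))) := by
      intro u; simp [hP]
    rw [Finset.sum_congr rfl (fun u _ => h1 u), Fin.sum_univ_eq_sum_range
      (fun u => max 0 (min (A ((σ.symm k : ℕ) + 1)) (B (u + 1))
        - max (A (σ.symm k : ℕ)) (B u)))]
    have hc0 : 0 ≤ A (σ.symm k : ℕ) := hA0 ▸ hAm 0 _ (by omega)
    have hcd : A (σ.symm k : ℕ) ≤ A ((σ.symm k : ℕ) + 1) := hAm _ _ (by omega)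
    have hd1 : A ((σ.symm k : ℕ) + 1) ≤ 1 := hAn ▸ hAm _ n (σ.symm k).isLt
    rw [sum_overlap B hBm hB0 hBm1 hc0 hcd hd1, hA, cum_succ (a1 ∘ σ) (σ.symm k)]
    simp
  have hcol : ∀ l, ∑ k, P k l = a2 l := by
    intro l
    rw [← Equiv.sum_comp σ (fun k => P k l)]
    have h1 : ∀ r : Fin n, P (σ r) l
        = max 0 (min (B ((τ.symm l : ℕ) + 1)) (A ((r : ℕ) + 1))
            - max (B (τ.symm l : ℕ)) (A (r : ℕ))) := by
      intro r; simp [hP, min_comm, max_comm]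
    rw [Finset.sum_congr rfl (fun r _ => h1 r), Fin.sum_univ_eq_sum_range
      (fun r => max 0 (min (B ((τ.symm l : ℕ) + 1)) (A (r + 1))
        - max (B (τ.symm l : ℕ)) (A r)))]
    have hc0 : 0 ≤ B (τ.symm l : ℕ) := hB0 ▸ hBm 0 _ (by omega)
    have hcd : B (τ.symm l : ℕ) ≤ B ((τ.symm l : ℕ) + 1) := hBm _ _ (by omega)
    have hd1 : B ((τ.symm l : ℕ) + 1) ≤ 1 := hBm1 ▸ hBm _ m (τ.symm l).isLt
    rw [sum_overlap A hAm hA0 hAn hc0 hcd hd1, hB, cum_succ (a2 ∘ τ) (τ.symm l)]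
    simp
  refine ⟨P, ⟨hPnn, hrow, hcol⟩, ?_⟩
  intro t
  set S1 : ℝ := ∑ k, ∑ l, P k l * (if x k ≤ t ∧ ¬ y l ≤ t then (1 : ℝ) else 0) with hS1
  set S2 : ℝ := ∑ k, ∑ l, P k l * (if y l ≤ t ∧ ¬ x k ≤ t then (1 : ℝ) else 0) with hS2
  have hsum : (∑ k, ∑ l, P k l *
      |(if x k ≤ t then (1 : ℝ) else 0) - (if y l ≤ t then (1 : ℝ) else 0)|) = S1 + S2 := by
    rw [hS1, hS2, ← Finset.sum_add_distrib]
    apply Finset.sum_congr rfl; intro k _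
    rw [← Finset.sum_add_distrib]
    apply Finset.sum_congr rfl; intro l _
    rw [← mul_add]
    congr 1
    by_cases h1 : x k ≤ t <;> by_cases h2 : y l ≤ t <;> simp [h1, h2]
  have hdiff : (∑ k, if x k ≤ t then a1 k else 0) - (∑ l, if y l ≤ t then a2 l else 0)
      = S1 - S2 := by
    have e1 : (∑ k, if x k ≤ t then a1 k else 0)
        = ∑ k, ∑ l, P k l * (if x k ≤ t then (1 : ℝ) else 0) := by
      apply Finset.sum_congr rfl; intro k _
      rw [← Finset.sum_mul, hrow k]
      by_cases h : x k ≤ t <;> simp [h]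
    have e2 : (∑ l, if y l ≤ t then a2 l else 0)
        = ∑ k, ∑ l, P k l * (if y l ≤ t then (1 : ℝ) else 0) := by
      rw [Finset.sum_comm]
      apply Finset.sum_congr rfl; intro l _
      rw [← Finset.sum_mul, hcol l]
      by_cases h : y l ≤ t <;> simp [h]
    rw [e1, e2, hS1, hS2, ← Finset.sum_sub_distrib, ← Finset.sum_sub_distrib]
    apply Finset.sum_congr rfl; intro k _
    rw [← Finset.sum_sub_distrib, ← Finset.sum_sub_distrib]
    apply Finset.sum_congr rfl; intro l _
    rw [← mul_sub, ← mul_sub]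
    congr 1
    by_cases h1 : x k ≤ t <;> by_cases h2 : y l ≤ t <;> simp [h1, h2]
  have hS1nn : 0 ≤ S1 := by
    apply Finset.sum_nonneg; intro k _
    apply Finset.sum_nonneg; intro l _
    apply mul_nonneg (hPnn k l)
    split_ifs <;> norm_num
  have hS2nn : 0 ≤ S2 := by
    apply Finset.sum_nonneg; intro k _
    apply Finset.sum_nonneg; intro l _
    apply mul_nonneg (hPnn k l)
    split_ifs <;> norm_num
  have hkey : S1 = 0 ∨ S2 = 0 := by
    by_contra h
    push_neg at h
    obtain ⟨h1, h2⟩ := h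
    -- extract witnesses
    have w1 : ∃ k l, P k l ≠ 0 ∧ x k ≤ t ∧ ¬ y l ≤ t := by
      by_contra hw; push_neg at hw
      apply h1
      rw [hS1]
      apply Finset.sum_eq_zero; intro k _
      apply Finset.sum_eq_zero; intro l _
      by_cases hp : P k l = 0
      · simp [hp]
      · have := hw k l hp
        by_cases hx : x k ≤ t
        · simp [hx, this hx]
        · simp [hx]
    have w2 : ∃ k l, P k l ≠ 0 ∧ y l ≤ t ∧ ¬ x k ≤ t := by
      by_contra hw; push_neg at hw
      apply h2
      rw [hS2]
      apply Finset.sum_eq_zero; intro k _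
      apply Finset.sum_eq_zero; intro l _
      by_cases hp : P k l = 0
      · simp [hp]
      · have := hw k l hp
        by_cases hy : y l ≤ t
        · simp [hy, this hy]
        · simp [hy]
    obtain ⟨k, l, hPkl, hxk, hyl⟩ := w1
    obtain ⟨k', l', hPkl', hyl', hxk'⟩ := w2
    -- positivity of the overlap expressions
    have hpos : ∀ (a b : Fin n) (c d : Fin m), P a d ≠ 0 →
        max (A (σ.symm a : ℕ)) (B (τ.symm d : ℕ))
          < min (A ((σ.symm a : ℕ) + 1)) (B ((τ.symm d : ℕ) + 1)) := by
      intro a b c d hne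
      by_contra hc
      push_neg at hc
      apply hne
      rw [hP]
      simp only
      rw [max_eq_left (by linarith)]
    have hpos1 := hpos k k l l hPkl
    have hpos2 := hpos k' k' l' l' hPkl'
    -- sorted positions
    set r := σ.symm k with hr
    set u := τ.symm l with hu
    set r' := σ.symm k' with hr'
    set u' := τ.symm l' with hu'
    have hxr : x (σ r) ≤ t := by rw [hr]; simpa using hxk
    have hxr' : ¬ x (σ r') ≤ t := by rw [hr']; simpa using hxk'
    have hyu : ¬ y (τ u) ≤ t := by rw [hu]; simpa using hyl
    have hyu' : y (τ u') ≤ t := by rw [hu']; simpa using hyl'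
    have hrr' : (r : ℕ) < r' := by
      by_contra hc
      push_neg at hc
      exact hxr' (le_trans (hxm (show r' ≤ r from hc)) hxr)
    have huu' : (u' : ℕ) < u := by
      by_contra hc
      push_neg at hc
      exact hyu (le_trans (hym (show u ≤ u' from hc)) hyu')
    have c1 : B (u : ℕ) < A ((r : ℕ) + 1) :=
      lt_of_le_of_lt (le_max_right _ _) (lt_of_lt_of_le hpos1 (min_le_left _ _))
    have c2 : A (r' : ℕ) < B ((u' : ℕ) + 1) :=
      lt_of_le_of_lt (le_max_left _ _) (lt_of_lt_of_le hpos2 (min_le_right _ _))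
    have c3 : A ((r : ℕ) + 1) ≤ A (r' : ℕ) := hAm _ _ (by omega)
    have c4 : B ((u' : ℕ) + 1) ≤ B (u : ℕ) := hBm _ _ (by omega)
    linarith
  rw [hsum, hdiff]
  rcases hkey with h | h
  · rw [h]; rw [abs_of_nonpos (by linarith)]; ring
  · rw [h]; rw [abs_of_nonneg (by linarith)]; ring

lemma grid_aux (L : ℕ) (s : ℕ → ℝ)
    (hmono : ∀ k l : ℕ, k ≤ l → l < L → s k ≤ s l)
    {p q : ℕ} (hp : p < L) (hq : q < L) (hpq : s p ≤ s q) :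
    s q - s p = ∑ l ∈ Finset.range (L - 1),
      (s (l + 1) - s l) *
        |(if s p ≤ s l then (1 : ℝ) else 0) - (if s q ≤ s l then (1 : ℝ) else 0)| := by
  classical
  have hex1 : ∃ l, l < L ∧ s p ≤ s l := ⟨p, hp, le_refl _⟩
  have hex2 : ∃ l, l < L ∧ s q ≤ s l := ⟨q, hq, le_refl _⟩
  set p' := Nat.find hex1 with hp'def
  set q' := Nat.find hex2 with hq'def
  have hp's : p' < L ∧ s p ≤ s p' := Nat.find_spec hex1
  have hq's : q' < L ∧ s q ≤ s q' := Nat.find_spec hex2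
  have hp'le : p' ≤ p := Nat.find_min' hex1 ⟨hp, le_refl _⟩
  have hq'le : q' ≤ q := Nat.find_min' hex2 ⟨hq, le_refl _⟩
  have hsp' : s p' = s p := le_antisymm (hmono p' p hp'le hp) hp's.2
  have hsq' : s q' = s q := le_antisymm (hmono q' q hq'le hq) hq's.2
  have hp'q' : p' ≤ q' := Nat.find_min' hex1 ⟨hq's.1, le_trans hpq hq's.2⟩
  have hterm : ∀ l ∈ Finset.range (L - 1),
      (s (l + 1) - s l) *
        |(if s p ≤ s l then (1 : ℝ) else 0) - (if s q ≤ s l then (1 : ℝ) else 0)|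
      = if s p ≤ s l ∧ ¬ s q ≤ s l then s (l + 1) - s l else 0 := by
    intro l _
    by_cases h1 : s q ≤ s l
    · have h2 : s p ≤ s l := le_trans hpq h1
      simp [h1, h2]
    · by_cases h2 : s p ≤ s l <;> simp [h1, h2]
  rw [Finset.sum_congr rfl hterm, ← Finset.sum_filter]
  have hfil : (Finset.range (L - 1)).filter (fun l => s p ≤ s l ∧ ¬ s q ≤ s l)
      = Finset.Ico p' q' := by
    ext l
    simp only [Finset.mem_filter, Finset.mem_range, Finset.mem_Ico]
    constructor
    · rintro ⟨hl, h1, h2⟩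
      refine ⟨Nat.find_min' hex1 ⟨by omega, h1⟩, ?_⟩
      by_contra h
      push_neg at h
      exact h2 (le_trans hq's.2 (hsq' ▸ hmono q' l h (by omega)) )
    · rintro ⟨h1, h2⟩
      have hlL : l < L := by
        have := hq's.1; omega
      refine ⟨by omega, hsp' ▸ hmono p' l h1 hlL, ?_⟩
      have := Nat.find_min hex2 h2
      push_neg at this
      intro hc
      exact absurd (this hlL) (not_lt.mpr hc)
  rw [hfil, Finset.sum_Ico_eq_sub _ hp'q',
    Finset.sum_range_sub (fun l => s l), Finset.sum_range_sub (fun l => s l)]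
  rw [← hsp', ← hsq']
  ring

lemma grid_decomp (L : ℕ) (s : ℕ → ℝ)
    (hmono : ∀ k l : ℕ, k ≤ l → l < L → s k ≤ s l)
    {p q : ℕ} (hp : p < L) (hq : q < L) :
    |s p - s q| = ∑ l ∈ Finset.range (L - 1),
      (s (l + 1) - s l) *
        |(if s p ≤ s l then (1 : ℝ) else 0) - (if s q ≤ s l then (1 : ℝ) else 0)| := by
  rcases le_total (s p) (s q) with h | h
  · rw [abs_of_nonpos (by linarith), neg_sub]
    exact grid_aux L s hmono hp hq h
  · rw [abs_of_nonneg (by linarith)]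
    rw [grid_aux L s hmono hq hp h]
    apply Finset.sum_congr rfl
    intro l _
    rw [abs_sub_comm]
theorem stmt0 (n m : ℕ) (hn : 1 ≤ n) (hm : 1 ≤ m)
    (a1 : Fin n → ℝ) (a2 : Fin m → ℝ)
    (ha1 : IsProbVec a1) (ha2 : IsProbVec a2)
    (C1 : Fin n → Fin n → ℝ) (C2 : Fin m → Fin m → ℝ)
    -- the sorted entries s_0 ≤ s_1 ≤ … ≤ s_{L-1} of C¹ and C² (0-indexed), L = n² + m²
    (s : ℕ → ℝ)
    (hmono : ∀ k l : ℕ, k ≤ l → l < n ^ 2 + m ^ 2 → s k ≤ s l)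
    (e : (Fin n × Fin n) ⊕ (Fin m × Fin m) ≃ Fin (n ^ 2 + m ^ 2))
    (he1 : ∀ i k, s ((e (Sum.inl (i, k))) : ℕ) = C1 i k)
    (he2 : ∀ j l, s ((e (Sum.inr (j, l))) : ℕ) = C2 j l)
    -- anchor CDFs
    (H1 : Fin n → ℝ → ℝ) (H2 : Fin m → ℝ → ℝ)
    (hH1 : ∀ i t, H1 i t = ∑ k, if C1 i k ≤ t then a1 k else 0)
    (hH2 : ∀ j t, H2 j t = ∑ l, if C2 j l ≤ t then a2 l else 0)
    -- 1D optimal transport cost between anchors i and j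
    (OT1 : Fin n → Fin m → ℝ)
    (hOT : ∀ i j, OT1 i j =
      sInf ((fun P => ∑ k, ∑ l, P k l * |C1 i k - C2 j l|) '' transportPolytope a1 a2))
    -- total variation on segment l
    (f : ℕ → ℝ)
    (hf : ∀ l, f l = ∑ i, ∑ j, a1 i * a2 j * |H1 i (s l) - H2 j (s l)|) :
    ∑ i, ∑ j, a1 i * a2 j * OT1 i j
      = ∑ l ∈ Finset.range (n ^ 2 + m ^ 2 - 1), (s (l + 1) - s l) * f l := by
  classical
  have key : ∀ (i : Fin n) (j : Fin m), OT1 i j =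
      ∑ l ∈ Finset.range (n ^ 2 + m ^ 2 - 1),
        (s (l + 1) - s l) * |H1 i (s l) - H2 j (s l)| := by
    intro i j
    have habs : ∀ (k : Fin n) (l' : Fin m), |C1 i k - C2 j l'| =
        ∑ l ∈ Finset.range (n ^ 2 + m ^ 2 - 1), (s (l + 1) - s l) *
          |(if C1 i k ≤ s l then (1 : ℝ) else 0) - (if C2 j l' ≤ s l then (1 : ℝ) else 0)| := by
      intro k l'
      have hp : ((e (Sum.inl (i, k))) : ℕ) < n ^ 2 + m ^ 2 := (e (Sum.inl (i, k))).isLt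
      have hq : ((e (Sum.inr (j, l'))) : ℕ) < n ^ 2 + m ^ 2 := (e (Sum.inr (j, l'))).isLt
      have hgd := grid_decomp (n ^ 2 + m ^ 2) s hmono hp hq
      rw [he1 i k, he2 j l'] at hgd
      exact hgd
    have hcost : ∀ P : Fin n → Fin m → ℝ,
        (∑ k, ∑ l', P k l' * |C1 i k - C2 j l'|)
        = ∑ l ∈ Finset.range (n ^ 2 + m ^ 2 - 1), (s (l + 1) - s l) *
            ∑ k, ∑ l', P k l' *
              |(if C1 i k ≤ s l then (1 : ℝ) else 0) - (if C2 j l' ≤ s l then (1 : ℝ) else 0)| := by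
      intro P
      rw [Finset.sum_congr rfl (fun k _ => Finset.sum_congr rfl
        (fun l' _ => by rw [habs k l', Finset.mul_sum]))]
      rw [Finset.sum_congr rfl (fun k (_ : k ∈ Finset.univ) => Finset.sum_comm)]
      rw [Finset.sum_comm]
      apply Finset.sum_congr rfl; intro l _
      rw [Finset.mul_sum]
      apply Finset.sum_congr rfl; intro k _
      rw [Finset.mul_sum]
      apply Finset.sum_congr rfl; intro l' _
      ring
    set V : ℝ := ∑ l ∈ Finset.range (n ^ 2 + m ^ 2 - 1),
      (s (l + 1) - s l) * |H1 i (s l) - H2 j (s l)| with hV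
    have hlb : ∀ z ∈ ((fun P => ∑ k, ∑ l, P k l * |C1 i k - C2 j l|) ''
        transportPolytope a1 a2), V ≤ z := by
      rintro z ⟨P, hPmem, rfl⟩
      obtain ⟨hPn, hPr, hPc⟩ := hPmem
      show V ≤ ∑ k, ∑ l', P k l' * |C1 i k - C2 j l'|
      rw [hcost P, hV]
      apply Finset.sum_le_sum
      intro l hl
      have hl' : l < n ^ 2 + m ^ 2 - 1 := Finset.mem_range.mp hl
      have hΔ : 0 ≤ s (l + 1) - s l :=
        sub_nonneg.mpr (hmono l (l + 1) (by omega) (by omega))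
      apply mul_le_mul_of_nonneg_left ?_ hΔ
      have hd : H1 i (s l) - H2 j (s l) = ∑ k, ∑ l', P k l' *
          ((if C1 i k ≤ s l then (1 : ℝ) else 0) - (if C2 j l' ≤ s l then (1 : ℝ) else 0)) := by
        have e1 : (∑ k, ∑ l', P k l' * (if C1 i k ≤ s l then (1 : ℝ) else 0)) = H1 i (s l) := by
          rw [hH1]
          apply Finset.sum_congr rfl; intro k _
          rw [← Finset.sum_mul, hPr k]
          by_cases h : C1 i k ≤ s l <;> simp [h]
        have e2 : (∑ k, ∑ l', P k l' * (if C2 j l' ≤ s l then (1 : ℝ) else 0)) = H2 j (s l) := by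
          rw [Finset.sum_comm, hH2]
          apply Finset.sum_congr rfl; intro l' _
          rw [← Finset.sum_mul, hPc l']
          by_cases h : C2 j l' ≤ s l <;> simp [h]
        rw [← e1, ← e2, ← Finset.sum_sub_distrib]
        apply Finset.sum_congr rfl; intro k _
        rw [← Finset.sum_sub_distrib]
        apply Finset.sum_congr rfl; intro l' _
        ring
      rw [hd]
      calc |∑ k, ∑ l', P k l' *
            ((if C1 i k ≤ s l then (1 : ℝ) else 0) - (if C2 j l' ≤ s l then (1 : ℝ) else 0))|
          ≤ ∑ k, |∑ l', P k l' *
            ((if C1 i k ≤ s l then (1 : ℝ) else 0) - (if C2 j l' ≤ s l then (1 : ℝ) else 0))| :=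
            Finset.abs_sum_le_sum_abs _ _
        _ ≤ ∑ k, ∑ l', |P k l' *
            ((if C1 i k ≤ s l then (1 : ℝ) else 0) - (if C2 j l' ≤ s l then (1 : ℝ) else 0))| :=
            Finset.sum_le_sum (fun k _ => Finset.abs_sum_le_sum_abs _ _)
        _ = ∑ k, ∑ l', P k l' *
            |(if C1 i k ≤ s l then (1 : ℝ) else 0) - (if C2 j l' ≤ s l then (1 : ℝ) else 0)| := by
            apply Finset.sum_congr rfl; intro k _
            apply Finset.sum_congr rfl; intro l' _
            rw [abs_mul, abs_of_nonneg (hPn k l')]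
    have hmem : V ∈ ((fun P => ∑ k, ∑ l, P k l * |C1 i k - C2 j l|) ''
        transportPolytope a1 a2) := by
      obtain ⟨P, hPmem, hPt⟩ := monotone_coupling a1 a2 ha1 ha2 (C1 i) (C2 j)
      refine ⟨P, hPmem, ?_⟩
      show (∑ k, ∑ l', P k l' * |C1 i k - C2 j l'|) = V
      rw [hcost P, hV]
      apply Finset.sum_congr rfl; intro l _
      congr 1
      rw [hPt (s l), hH1, hH2]
    rw [hOT i j]
    exact le_antisymm (csInf_le ⟨V, hlb⟩ hmem) (le_csInf ⟨V, hmem⟩ hlb)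
  calc ∑ i, ∑ j, a1 i * a2 j * OT1 i j
      = ∑ i, ∑ j, ∑ l ∈ Finset.range (n ^ 2 + m ^ 2 - 1),
          (s (l + 1) - s l) * (a1 i * a2 j * |H1 i (s l) - H2 j (s l)|) := by
        apply Finset.sum_congr rfl; intro i _
        apply Finset.sum_congr rfl; intro j _
        rw [key i j, Finset.mul_sum]
        apply Finset.sum_congr rfl; intro l _
        ring
    _ = ∑ l ∈ Finset.range (n ^ 2 + m ^ 2 - 1), (s (l + 1) - s l) * f l := by
        rw [Finset.sum_congr rfl (fun i (_ : i ∈ Finset.univ) => Finset.sum_comm),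
          Finset.sum_comm]
        apply Finset.sum_congr rfl; intro l _
        rw [hf l, Finset.mul_sum]
        apply Finset.sum_congr rfl; intro i _
        rw [Finset.mul_sum]
end

section
/- Let n, m ≥ 1, let a ∈ ℝ^n and b ∈ ℝ^m have nonnegative entries, let g, g' : {1,…,n} → ℝ agree at every index except possibly a single index i₀, with g(i₀) = c and g'(i₀) = c', and let h : {1,…,m} → ℝ. Define S(u,v) = ∑_{x : u ≤ h_x < v} b_x and T(u,v) = ∑_{x : u ≤ h_x < v} b_x h_x, where u = −∞ (resp. v = ∞) means the lower (resp. upper) constraint is dropped. Then ∑_{i,j} a_i b_j |g'(i) − h(j)| − ∑_{i,j} a_i b_j |g(i) − h(j)| = − a_{i₀} (S(−∞,c)·c − T(−∞,c)) − a_{i₀} (T(c,∞) − S(c,∞)·c) + a_{i₀} (S(−∞,c')·c' − T(−∞,c')) + a_{i₀} (T(c',∞) − S(c',∞)·c'). -/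
open Finset

lemma key_abs {m : ℕ} (b h : Fin m → ℝ) (c : ℝ) :
    (∑ j, b j * |c - h j|)
      = ((∑ x, if h x < c then b x else 0) * c
          - (∑ x, if h x < c then b x * h x else 0))
        + ((∑ x, if c ≤ h x then b x * h x else 0)
          - (∑ x, if c ≤ h x then b x else 0) * c) := by
  rw [Finset.sum_mul, Finset.sum_mul, ← Finset.sum_sub_distrib, ← Finset.sum_sub_distrib,
    ← Finset.sum_add_distrib]
  refine Finset.sum_congr rfl fun j _ => ?_
  by_cases hj : h j < c
  · rw [if_pos hj, if_pos hj, if_neg (not_le.2 hj), if_neg (not_le.2 hj),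
      abs_of_pos (by linarith)]
    ring
  · rw [if_neg hj, if_neg hj, if_pos (not_lt.1 hj), if_pos (not_lt.1 hj),
      abs_of_nonpos (by push_neg at hj; linarith)]
    ring

theorem stmt3 (n m : ℕ) (hn : 1 ≤ n) (hm : 1 ≤ m)
    (a : Fin n → ℝ) (b : Fin m → ℝ)
    (ha : ∀ i, 0 ≤ a i) (hb : ∀ j, 0 ≤ b j)
    (g g' : Fin n → ℝ) (i0 : Fin n) (c c' : ℝ)
    (hgg' : ∀ i, i ≠ i0 → g' i = g i)
    (hgc : g i0 = c) (hgc' : g' i0 = c')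
    (h : Fin m → ℝ) :
    (∑ i, ∑ j, a i * b j * |g' i - h j|) - (∑ i, ∑ j, a i * b j * |g i - h j|)
      = - a i0 * ((∑ x, if h x < c then b x else 0) * c
            - (∑ x, if h x < c then b x * h x else 0))
        - a i0 * ((∑ x, if c ≤ h x then b x * h x else 0)
            - (∑ x, if c ≤ h x then b x else 0) * c)
        + a i0 * ((∑ x, if h x < c' then b x else 0) * c'
            - (∑ x, if h x < c' then b x * h x else 0))
        + a i0 * ((∑ x, if c' ≤ h x then b x * h x else 0)
            - (∑ x, if c' ≤ h x then b x else 0) * c') := by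
  have key : ∀ i, (∑ j, a i * b j * |g' i - h j|) - (∑ j, a i * b j * |g i - h j|)
      = if i = i0 then
          - a i0 * ((∑ x, if h x < c then b x else 0) * c
              - (∑ x, if h x < c then b x * h x else 0))
          - a i0 * ((∑ x, if c ≤ h x then b x * h x else 0)
              - (∑ x, if c ≤ h x then b x else 0) * c)
          + a i0 * ((∑ x, if h x < c' then b x else 0) * c'
              - (∑ x, if h x < c' then b x * h x else 0))
          + a i0 * ((∑ x, if c' ≤ h x then b x * h x else 0)
              - (∑ x, if c' ≤ h x then b x else 0) * c')
        else 0 := by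
    intro i
    by_cases hi : i = i0
    · subst hi
      rw [if_pos rfl, hgc, hgc']
      have e1 : (∑ j, a i * b j * |c' - h j|) = a i * ∑ j, b j * |c' - h j| := by
        rw [Finset.mul_sum]; exact Finset.sum_congr rfl fun j _ => by ring
      have e2 : (∑ j, a i * b j * |c - h j|) = a i * ∑ j, b j * |c - h j| := by
        rw [Finset.mul_sum]; exact Finset.sum_congr rfl fun j _ => by ring
      rw [e1, e2, key_abs b h c, key_abs b h c']
      ring
    · rw [if_neg hi]
      have : ∀ j, a i * b j * |g' i - h j| = a i * b j * |g i - h j| := by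
        intro j; rw [hgg' i hi]
      simp [this]
  calc (∑ i, ∑ j, a i * b j * |g' i - h j|) - (∑ i, ∑ j, a i * b j * |g i - h j|)
      = ∑ i, ((∑ j, a i * b j * |g' i - h j|) - (∑ j, a i * b j * |g i - h j|)) := by
        rw [Finset.sum_sub_distrib]
    _ = _ := by
        rw [Finset.sum_congr rfl fun i _ => key i, Finset.sum_ite_eq' Finset.univ i0,
          if_pos (Finset.mem_univ i0)]
end

section
/- Let n, m ≥ 1, let a ∈ ℝ^n and b ∈ ℝ^m be probability vectors, and let x : {1,…,n} → ℝ and y : {1,…,m} → ℝ. Define the CDFs F(t) = ∑_{i : x_i ≤ t} a_i and G(t) = ∑_{j : y_j ≤ t} b_j. Then the infimum over P ∈ U(a,b) of ∑_{i,j} P_{ij} |x_i − y_j| is attained and equals ∫_ℝ |F(t) − G(t)| dt. -/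
open Finset MeasureTheory

/-!
With `stepSub u v t = 1[u ≤ t] - 1[v ≤ t]`, every coupling `P` gives
`F t - G t = ∑ i j, P i j * stepSub (x i) (y j) t`, while
`|x i - y j| = ∫ |stepSub (x i) (y j) t| dt`; so the triangle inequality bounds `∫ |F - G|` by
the cost of `P`. Equality holds for the monotone coupling: lay the masses `a` and `b` out as
consecutive intervals of `[0, 1)`, in increasing order of `x` and of `y` (ties broken by index),
and let `P i j` be the length of the overlap of the `i`-th and `j`-th intervals. No two pairs in
its support cross, so for each `t` all the terms `P i j * stepSub (x i) (y j) t` have the same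
sign and the triangle inequality is an equality.
-/

theorem Finset.abs_sum_eq_sum_abs_of_nonneg_of_pos {ι G : Type*} [AddCommGroup G]
    [LinearOrder G] [IsOrderedAddMonoid G] {s : Finset ι} {f : ι → G}
    (h : ∀ i ∈ s, ∀ j ∈ s, 0 < f i → 0 ≤ f j) : |∑ i ∈ s, f i| = ∑ i ∈ s, |f i| := by
  by_cases hpos : ∃ i ∈ s, 0 < f i
  · obtain ⟨i, hi, hfi⟩ := hpos
    have hnonneg : ∀ j ∈ s, 0 ≤ f j := fun j hj => h i hi j hj hfi
    rw [abs_of_nonneg (sum_nonneg hnonneg)]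
    exact sum_congr rfl fun j hj => (abs_of_nonneg (hnonneg j hj)).symm
  · push Not at hpos
    rw [abs_of_nonpos (sum_nonpos hpos), ← sum_neg_distrib]
    exact sum_congr rfl fun j hj => (abs_of_nonpos (hpos j hj)).symm

noncomputable def stepSub (u v t : ℝ) : ℝ := (if u ≤ t then 1 else 0) - (if v ≤ t then 1 else 0)

section StepSub

variable {u v t : ℝ}

lemma stepSub_pos_iff : 0 < stepSub u v t ↔ u ≤ t ∧ t < v := by
  unfold stepSub; split_ifs <;> grind

lemma stepSub_neg_iff : stepSub u v t < 0 ↔ v ≤ t ∧ t < u := by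
  unfold stepSub; split_ifs <;> grind

variable (u v)

lemma stepSub_eq_indicator_sub_indicator :
    stepSub u v = (Set.Ico u v).indicator 1 - (Set.Ico v u).indicator 1 := by
  ext t; simp only [stepSub, Pi.sub_apply, Set.indicator_apply, Set.mem_Ico, Pi.one_apply]
  split_ifs <;> grind

lemma abs_stepSub_eq_indicator_add_indicator :
    (fun t => |stepSub u v t|) = (Set.Ico u v).indicator 1 + (Set.Ico v u).indicator 1 := by
  ext t; simp only [stepSub, Pi.add_apply, Set.indicator_apply, Set.mem_Ico, Pi.one_apply]
  split_ifs <;> grind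

lemma integrable_indicator_one_Ico :
    Integrable ((Set.Ico u v).indicator (1 : ℝ → ℝ)) :=
  (integrable_indicator_iff measurableSet_Ico).2 (integrableOn_const measure_Ico_lt_top.ne)

lemma integrable_stepSub : Integrable (stepSub u v) := by
  rw [stepSub_eq_indicator_sub_indicator]
  exact (integrable_indicator_one_Ico u v).sub (integrable_indicator_one_Ico v u)

lemma integral_abs_stepSub : ∫ t, |stepSub u v t| = |u - v| := by
  rw [abs_stepSub_eq_indicator_add_indicator, Pi.add_def,
    integral_add (integrable_indicator_one_Ico u v) (integrable_indicator_one_Ico v u)]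
  simp only [Pi.one_def, integral_indicator_const _ measurableSet_Ico, Real.volume_real_Ico,
    smul_eq_mul, mul_one]
  rcases le_total u v with h | h
  · simp [h, abs_of_nonpos (sub_nonpos.2 h)]
  · simp [h, abs_of_nonneg (sub_nonneg.2 h)]

end StepSub

section RankIco

variable {ι β : Type*} [Fintype ι] [LinearOrder β] (r : ι → β) (w : ι → ℝ)

def rankIco (i : ι) : Set ℝ :=
  Set.Ico (∑ k with r k < r i, w k) (∑ k with r k < r i, w k + w i)

variable {r w}

lemma sum_rank_lt_add_le (hw : ∀ k, 0 ≤ w k) {i : ι} {s : Finset ι}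
    (hs : ∀ k, r k ≤ r i → k ∈ s) :
    ∑ k with r k < r i, w k + w i ≤ ∑ k ∈ s, w k := by
  classical
  rw [add_comm, ← sum_insert (s := ({k | r k < r i} : Finset ι)) (by simp)]
  refine sum_le_sum_of_subset_of_nonneg (fun k hk => hs k ?_) fun k _ _ => hw k
  rcases mem_insert.1 hk with rfl | hk
  · exact le_rfl
  · exact (mem_filter.1 hk).2.le

lemma lt_of_mem_rankIco_of_rank_lt (hw : ∀ k, 0 ≤ w k) {i k : ι} (hik : r i < r k) {u v : ℝ}
    (hu : u ∈ rankIco r w i) (hv : v ∈ rankIco r w k) : u < v := by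
  refine hu.2.trans_le (le_trans ?_ hv.1)
  exact sum_rank_lt_add_le hw fun j hj => by simpa using hj.trans_lt hik

lemma rankIco_subset (hw : ∀ k, 0 ≤ w k) (i : ι) :
    rankIco r w i ⊆ Set.Ico 0 (∑ k, w k) :=
  Set.Ico_subset_Ico (sum_nonneg fun k _ => hw k) (sum_rank_lt_add_le hw fun k _ => mem_univ k)

lemma volume_rankIco (i : ι) : volume (rankIco r w i) = ENNReal.ofReal (w i) := by
  simp [rankIco, Real.volume_Ico]

lemma measureReal_rankIco {i : ι} (hw : 0 ≤ w i) : volume.real (rankIco r w i) = w i := by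
  rw [measureReal_def, volume_rankIco, ENNReal.toReal_ofReal hw]

lemma pairwise_disjoint_rankIco (hr : Function.Injective r) (hw : ∀ k, 0 ≤ w k) :
    Pairwise (Function.onFun Disjoint (rankIco r w)) := by
  intro i k hik
  rw [Function.onFun, Set.disjoint_left]
  intro u hu hu'
  rcases lt_or_gt_of_ne (hr.ne hik) with h | h
  · exact lt_irrefl u (lt_of_mem_rankIco_of_rank_lt hw h hu hu')
  · exact lt_irrefl u (lt_of_mem_rankIco_of_rank_lt hw h hu' hu)

lemma volume_Ico_diff_iUnion_rankIco (hr : Function.Injective r) (hw : ∀ k, 0 ≤ w k) :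
    volume (Set.Ico 0 (∑ k, w k) \ ⋃ i, rankIco r w i) = 0 := by
  have hU : volume (⋃ i, rankIco r w i) = ENNReal.ofReal (∑ k, w k) := by
    rw [measure_iUnion (pairwise_disjoint_rankIco hr hw) fun i => measurableSet_Ico,
      tsum_fintype, ENNReal.ofReal_sum_of_nonneg fun k _ => hw k]
    simp only [volume_rankIco]
  rw [measure_sdiff (Set.iUnion_subset (rankIco_subset hw))
    (MeasurableSet.iUnion fun i => measurableSet_Ico).nullMeasurableSet (by simp [hU]),
    hU, Real.volume_Ico, sub_zero, tsub_self]

lemma sum_measureReal_inter_rankIco (hr : Function.Injective r) (hw : ∀ k, 0 ≤ w k)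
    {A : Set ℝ} (hA : MeasurableSet A) (hAsub : A ⊆ Set.Ico 0 (∑ k, w k)) :
    ∑ i, volume.real (A ∩ rankIco r w i) = volume.real A := by
  have hfin : ∀ i, volume (A ∩ rankIco r w i) ≠ ⊤ := fun i =>
    ne_top_of_le_ne_top (by simp [volume_rankIco]) (measure_mono Set.inter_subset_right)
  rw [← measureReal_iUnion_fintype (fun i k hik => (pairwise_disjoint_rankIco hr hw hik).mono
      Set.inter_subset_right Set.inter_subset_right) (fun i => hA.inter measurableSet_Ico) hfin,
    ← Set.inter_iUnion, measureReal_def, measureReal_def, measure_inter_conull' <|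
      measure_mono_null (Set.sdiff_subset_sdiff_left hAsub) (volume_Ico_diff_iUnion_rankIco hr hw)]

end RankIco

section LexRank

variable {ι α : Type*} (x : ι → α)

def lexRank (i : ι) : α ×ₗ ι := toLex (x i, i)

lemma lexRank_injective : Function.Injective (lexRank x) :=
  fun _ _ h => congrArg Prod.snd (toLex.injective h)

variable {x}

lemma lexRank_lt_lexRank [LinearOrder ι] [LinearOrder α] {i k : ι} (h : x i < x k) :
    lexRank x i < lexRank x k :=
  Prod.Lex.toLex_lt_toLex.2 (Or.inl h)

end LexRank

section Coupling

variable {n m : ℕ} {β γ : Type*} [LinearOrder β] [LinearOrder γ]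

noncomputable def rankCoupling (r : Fin n → β) (a : Fin n → ℝ) (s : Fin m → γ)
    (b : Fin m → ℝ) (i : Fin n) (j : Fin m) : ℝ :=
  volume.real (rankIco r a i ∩ rankIco s b j)

variable {r : Fin n → β} {a : Fin n → ℝ} {s : Fin m → γ} {b : Fin m → ℝ}

lemma rankCoupling_nonneg (i : Fin n) (j : Fin m) : 0 ≤ rankCoupling r a s b i j :=
  measureReal_nonneg

lemma rankCoupling_mem (hr : Function.Injective r) (hs : Function.Injective s)
    (ha : IsProbVec a) (hb : IsProbVec b) :
    rankCoupling r a s b ∈ transportPolytope a b := by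
  refine ⟨rankCoupling_nonneg, fun i => ?_, fun j => ?_⟩
  · exact (sum_measureReal_inter_rankIco hs hb.1 measurableSet_Ico
      ((rankIco_subset ha.1 i).trans (by rw [ha.2, hb.2]))).trans (measureReal_rankIco (ha.1 i))
  · simp only [rankCoupling, Set.inter_comm (rankIco r a _)]
    exact (sum_measureReal_inter_rankIco hr ha.1 measurableSet_Ico
      ((rankIco_subset hb.1 j).trans (by rw [ha.2, hb.2]))).trans (measureReal_rankIco (hb.1 j))

lemma rankCoupling_eq_zero_of_crossing (ha : ∀ i, 0 ≤ a i) (hb : ∀ j, 0 ≤ b j)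
    {i k : Fin n} {j l : Fin m} (hik : r i < r k) (hlj : s l < s j)
    (hij : rankCoupling r a s b i j ≠ 0) : rankCoupling r a s b k l = 0 := by
  by_contra hkl
  obtain ⟨u, hui, huj⟩ := nonempty_of_measureReal_ne_zero hij
  obtain ⟨v, hvk, hvl⟩ := nonempty_of_measureReal_ne_zero hkl
  exact lt_asymm (lt_of_mem_rankIco_of_rank_lt ha hik hui hvk)
    (lt_of_mem_rankIco_of_rank_lt hb hlj hvl huj)

end Coupling

section Cost

variable {n m : ℕ}

noncomputable def discreteCdf (a x : Fin n → ℝ) (t : ℝ) : ℝ := ∑ i, if x i ≤ t then a i else 0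

lemma discreteCdf_sub_eq_sum {a : Fin n → ℝ} {b : Fin m → ℝ} {P : Fin n → Fin m → ℝ}
    (hP : P ∈ transportPolytope a b) (x : Fin n → ℝ) (y : Fin m → ℝ) (t : ℝ) :
    discreteCdf a x t - discreteCdf b y t = ∑ i, ∑ j, P i j * stepSub (x i) (y j) t := by
  have hx : discreteCdf a x t = ∑ i, ∑ j, P i j * if x i ≤ t then 1 else 0 :=
    sum_congr rfl fun i _ => by rw [← sum_mul, hP.2.1 i, mul_ite, mul_one, mul_zero]
  have hy : discreteCdf b y t = ∑ i, ∑ j, P i j * if y j ≤ t then 1 else 0 := by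
    rw [sum_comm]
    exact sum_congr rfl fun j _ => by rw [← sum_mul, hP.2.2 j, mul_ite, mul_one, mul_zero]
  simp only [hx, hy, stepSub, mul_sub, sum_sub_distrib]

lemma sum_mul_abs_sub_eq_integral {ι κ : Type*} [Fintype ι] [Fintype κ] (P : ι → κ → ℝ)
    (x : ι → ℝ) (y : κ → ℝ) :
    ∑ i, ∑ j, P i j * |x i - y j| = ∫ t, ∑ i, ∑ j, P i j * |stepSub (x i) (y j) t| := by
  have hint : ∀ i j, Integrable fun t => P i j * |stepSub (x i) (y j) t| := fun i j =>
    (integrable_stepSub _ _).abs.const_mul _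
  rw [integral_finsetSum _ fun i _ => integrable_finsetSum _ fun j _ => hint i j]
  refine sum_congr rfl fun i _ => ?_
  rw [integral_finsetSum _ fun j _ => hint i j]
  simp only [integral_const_mul, integral_abs_stepSub]

lemma integral_abs_discreteCdf_sub_le {a : Fin n → ℝ} {b : Fin m → ℝ} {P : Fin n → Fin m → ℝ}
    (hP : P ∈ transportPolytope a b) (x : Fin n → ℝ) (y : Fin m → ℝ) :
    ∫ t, |discreteCdf a x t - discreteCdf b y t| ≤ ∑ i, ∑ j, P i j * |x i - y j| := by
  simp only [discreteCdf_sub_eq_sum hP, sum_mul_abs_sub_eq_integral]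
  refine integral_mono (integrable_finsetSum _ fun i _ => integrable_finsetSum _ fun j _ =>
    (integrable_stepSub _ _).const_mul _).abs (integrable_finsetSum _ fun i _ =>
    integrable_finsetSum _ fun j _ => (integrable_stepSub _ _).abs.const_mul _) fun t => ?_
  calc |∑ i, ∑ j, P i j * stepSub (x i) (y j) t|
      ≤ ∑ i, ∑ j, |P i j * stepSub (x i) (y j) t| :=
        (abs_sum_le_sum_abs _ _).trans (sum_le_sum fun i _ => abs_sum_le_sum_abs _ _)
    _ = ∑ i, ∑ j, P i j * |stepSub (x i) (y j) t| := by
        simp only [abs_mul, abs_of_nonneg (hP.1 _ _)]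

lemma abs_sum_mul_stepSub_rankCoupling {a : Fin n → ℝ} {b : Fin m → ℝ}
    (ha : ∀ i, 0 ≤ a i) (hb : ∀ j, 0 ≤ b j) (x : Fin n → ℝ) (y : Fin m → ℝ) (t : ℝ) :
    |∑ i, ∑ j, rankCoupling (lexRank x) a (lexRank y) b i j * stepSub (x i) (y j) t|
      = ∑ i, ∑ j, rankCoupling (lexRank x) a (lexRank y) b i j * |stepSub (x i) (y j) t| := by
  simp only [← Fintype.sum_prod_type']
  rw [abs_sum_eq_sum_abs_of_nonneg_of_pos]
  · exact sum_congr rfl fun p _ => by rw [abs_mul, abs_of_nonneg (rankCoupling_nonneg _ _)]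
  rintro ⟨i, j⟩ - ⟨k, l⟩ - hpos
  obtain ⟨hij, hd⟩ := (pos_and_pos_or_neg_and_neg_of_mul_pos hpos).resolve_right
    fun h => h.1.not_ge (rankCoupling_nonneg _ _)
  obtain ⟨hxi, hyj⟩ := stepSub_pos_iff.1 hd
  by_cases hkl : rankCoupling (lexRank x) a (lexRank y) b k l = 0
  · simp [hkl]
  refine mul_nonneg (rankCoupling_nonneg k l) (not_lt.1 fun hneg => hkl ?_)
  obtain ⟨hyl, hxk⟩ := stepSub_neg_iff.1 hneg
  exact rankCoupling_eq_zero_of_crossing ha hb (lexRank_lt_lexRank (hxi.trans_lt hxk))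
    (lexRank_lt_lexRank (hyl.trans_lt hyj)) hij.ne'

end Cost

theorem stmt4_general (n m : ℕ)
    (a : Fin n → ℝ) (b : Fin m → ℝ) (ha : IsProbVec a) (hb : IsProbVec b)
    (x : Fin n → ℝ) (y : Fin m → ℝ)
    (F G : ℝ → ℝ)
    (hF : ∀ t, F t = ∑ i, if x i ≤ t then a i else 0)
    (hG : ∀ t, G t = ∑ j, if y j ≤ t then b j else 0) :
    IsLeast ((fun P => ∑ i, ∑ j, P i j * |x i - y j|) '' transportPolytope a b)
      (∫ t : ℝ, |F t - G t|) := by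
  obtain rfl : F = discreteCdf a x := funext hF
  obtain rfl : G = discreteCdf b y := funext hG
  have hQ := rankCoupling_mem (lexRank_injective x) (lexRank_injective y) ha hb
  refine ⟨⟨_, hQ, ?_⟩, ?_⟩
  · simp only [sum_mul_abs_sub_eq_integral, discreteCdf_sub_eq_sum hQ,
      abs_sum_mul_stepSub_rankCoupling ha.1 hb.1]
  · rintro _ ⟨P, hP, rfl⟩
    exact integral_abs_discreteCdf_sub_le hP x y

theorem stmt4 (n m : ℕ) (hn : 1 ≤ n) (hm : 1 ≤ m)
    (a : Fin n → ℝ) (b : Fin m → ℝ) (ha : IsProbVec a) (hb : IsProbVec b)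
    (x : Fin n → ℝ) (y : Fin m → ℝ)
    (F G : ℝ → ℝ)
    (hF : ∀ t, F t = ∑ i, if x i ≤ t then a i else 0)
    (hG : ∀ t, G t = ∑ j, if y j ≤ t then b j else 0) :
    IsLeast ((fun P => ∑ i, ∑ j, P i j * |x i - y j|) '' transportPolytope a b)
      (∫ t : ℝ, |F t - G t|) :=
  stmt4_general n m a b ha hb x y F G hF hG
end

section
/- Let n, m ≥ 1, let a ∈ ℝ^n and b ∈ ℝ^m be probability vectors, let x : {1,…,n} → ℝ and y : {1,…,m} → ℝ, and let p ≥ 1 be a real number. Define the CDFs F(t) = ∑_{i : x_i ≤ t} a_i and G(t) = ∑_{j : y_j ≤ t} b_j, and the quantile functions F⁻¹(u) = inf{t ∈ ℝ : F(t) ≥ u} and G⁻¹(u) = inf{t ∈ ℝ : G(t) ≥ u} for u ∈ (0,1). Then the infimum over P ∈ U(a,b) of ∑_{i,j} P_{ij} |x_i − y_j|^p is attained and equals ∫_0^1 |F⁻¹(u) − G⁻¹(u)|^p du. -/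
/-!
For sorted supports the cost `|x i - y j| ^ p` is a Monge array, by convexity of `|·| ^ p`.
Among the optimal couplings choose one that also minimises the strictly Monge cost
`-(i * j)`; uncrossing two positive entries `(i, j)`, `(k, l)` with `i < k`, `l < j` would not
increase the first cost and would strictly decrease the second, so this coupling has monotone
support. A coupling with monotone support is determined by its marginals, because its corner
sums are `min (A i) (B j)` for the partial sums `A`, `B` of `a`, `b`; hence it is the
northwest-corner coupling, whose `(i, j)` entry is the length of the overlap of the interval
`(A i, A (i+1)]`, on which the quantile function of `a` equals `x i`, with the interval
`(B j, B (j+1)]`. Integrating over `u ∈ (0, 1)` interval by interval gives the quantile formula.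
Unsorted data are reduced to sorted ones by relabelling.
-/

open Finset MeasureTheory

variable {n m : ℕ}

section CumSum

variable {a f g : Fin n → ℝ} {i : ℕ}

def cumSum (a : Fin n → ℝ) (i : ℕ) : ℝ := ∑ k : Fin n, if (k : ℕ) < i then a k else 0

lemma sum_ite_le_sum_ite (ha : ∀ k, 0 ≤ a k) {p q : Fin n → Prop} [DecidablePred p]
    [DecidablePred q] (hpq : ∀ k, p k → q k) :
    (∑ k, if p k then a k else 0) ≤ ∑ k, if q k then a k else 0 :=
  sum_le_sum fun k _ => by
    by_cases hp : p k
    · simp [hp, hpq k hp]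
    · by_cases hq : q k <;> simp [hp, hq, ha k]

lemma cumSum_mono (ha : ∀ k, 0 ≤ a k) : Monotone (cumSum a) :=
  fun _ _ hij => sum_ite_le_sum_ite ha fun _ hk => hk.trans_le hij

@[simp] lemma cumSum_zero : cumSum a 0 = 0 := by simp [cumSum]

lemma cumSum_succ (a : Fin n → ℝ) (i : Fin n) : cumSum a (i + 1) = cumSum a i + a i := by
  have hai : a i = ∑ k, if k = i then a k else 0 := by simp
  rw [cumSum, cumSum, hai, ← sum_add_distrib]
  refine sum_congr rfl fun k _ => ?_
  rcases lt_trichotomy (k : ℕ) i with h | h | h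
  · simp [h, h.trans (Nat.lt_succ_self _), Fin.ne_of_lt h]
  · simp [Fin.ext h]
  · simp [h.not_gt, (Nat.succ_le_of_lt h).not_gt, (Fin.ne_of_lt h).symm]

lemma cumSum_congr (h : ∀ k : Fin n, (k : ℕ) < i → f k = g k) : cumSum f i = cumSum g i :=
  sum_congr rfl fun k _ => by split_ifs with hk; exacts [h k hk, rfl]

lemma cumSum_eq_sum (h : ∀ k : Fin n, i ≤ k → a k = 0) : cumSum a i = ∑ k, a k :=
  sum_congr rfl fun k _ => by split_ifs with hk; exacts [rfl, (h k (not_lt.1 hk)).symm]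

lemma cumSum_le_sum (ha : ∀ k, 0 ≤ a k) : cumSum a i ≤ ∑ k, a k :=
  sum_le_sum fun k _ => by split_ifs <;> simp [ha k]

lemma cumSum_le_cumSum (h : ∀ k, f k ≤ g k) : cumSum f i ≤ cumSum g i :=
  sum_le_sum fun k _ => by split_ifs <;> simp [h k]

lemma IsProbVec.cumSum_le_one (ha : IsProbVec a) : cumSum a i ≤ 1 :=
  ha.2 ▸ cumSum_le_sum ha.1

lemma IsProbVec.cumSum_eq_one (ha : IsProbVec a) : cumSum a n = 1 :=
  ha.2 ▸ cumSum_eq_sum fun k hk => absurd k.isLt hk.not_gt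

end CumSum

section QuantileCell

variable {a : Fin n → ℝ} {i k : Fin n} {u v : ℝ}

def quantileCell (a : Fin n → ℝ) (i : Fin n) : Set ℝ :=
  Set.Ioc (cumSum a i) (cumSum a (i + 1))

lemma lt_of_mem_quantileCell_of_lt (ha : ∀ k, 0 ≤ a k) (hu : u ∈ quantileCell a i)
    (hv : v ∈ quantileCell a k) (hik : i < k) : u < v :=
  calc u ≤ cumSum a (i + 1) := hu.2
    _ ≤ cumSum a k := cumSum_mono ha (Nat.succ_le_of_lt hik)
    _ < v := hv.1

lemma eq_of_mem_quantileCell (ha : ∀ k, 0 ≤ a k) (hi : u ∈ quantileCell a i)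
    (hk : u ∈ quantileCell a k) : i = k := by
  rcases lt_trichotomy i k with h | h | h
  · exact absurd (lt_of_mem_quantileCell_of_lt ha hi hk h) (lt_irrefl u)
  · exact h
  · exact absurd (lt_of_mem_quantileCell_of_lt ha hk hi h) (lt_irrefl u)

lemma pairwise_disjoint_quantileCell (ha : ∀ k, 0 ≤ a k) :
    Pairwise (Function.onFun Disjoint (quantileCell a)) :=
  fun _ _ hik => Set.disjoint_left.2 fun _ hi hk => hik (eq_of_mem_quantileCell ha hi hk)

lemma volume_real_quantileCell (ha : ∀ k, 0 ≤ a k) (i : Fin n) :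
    volume.real (quantileCell a i) = a i := by
  rw [quantileCell, Real.volume_real_Ioc_of_le (cumSum_mono ha (Nat.le_succ i)), cumSum_succ]
  ring

lemma IsProbVec.quantileCell_subset (ha : IsProbVec a) (i : Fin n) :
    quantileCell a i ⊆ Set.Ioc 0 1 :=
  Set.Ioc_subset_Ioc (cumSum_zero (a := a) ▸ cumSum_mono ha.1 (Nat.zero_le _)) ha.cumSum_le_one

lemma IsProbVec.iUnion_quantileCell (ha : IsProbVec a) : ⋃ i, quantileCell a i = Set.Ioc 0 1 := by
  refine (Set.iUnion_subset ha.quantileCell_subset).antisymm fun u hu => ?_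
  have hun : u ≤ cumSum a n := hu.2.trans ha.cumSum_eq_one.ge
  have hex : ∃ k, u ≤ cumSum a k := ⟨n, hun⟩
  have hpos : Nat.find hex ≠ 0 := fun h => by
    have := Nat.find_spec hex
    rw [h, cumSum_zero] at this
    exact this.not_gt hu.1
  have hle : Nat.find hex ≤ n := Nat.find_min' hex hun
  refine Set.mem_iUnion.2 ⟨⟨Nat.find hex - 1, by omega⟩, ?_, ?_⟩
  · exact not_le.1 (Nat.find_min hex (Nat.sub_one_lt hpos))
  · simpa [Nat.sub_add_cancel (Nat.one_le_iff_ne_zero.2 hpos)] using Nat.find_spec hex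

noncomputable def quantile (a x : Fin n → ℝ) (u : ℝ) : ℝ :=
  sInf {t | u ≤ ∑ k, if x k ≤ t then a k else 0}

lemma quantile_eq_of_mem_quantileCell (ha : ∀ k, 0 ≤ a k) {x : Fin n → ℝ} (hx : Monotone x)
    (hu : u ∈ quantileCell a i) : quantile a x u = x i := by
  refine IsLeast.csInf_eq ⟨?_, fun t ht => ?_⟩
  · exact hu.2.trans (sum_ite_le_sum_ite ha fun k hk => hx (Nat.lt_succ_iff.1 hk))
  · by_contra! hti
    refine (hu.1.trans_le ht).not_ge (sum_ite_le_sum_ite ha fun k hk => ?_)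
    by_contra! hik
    exact (hx hik).not_gt (hk.trans_lt hti)

end QuantileCell

section Northwest

variable {a : Fin n → ℝ} {b : Fin m → ℝ}

def transportCost (c P : Fin n → Fin m → ℝ) : ℝ := ∑ i, ∑ j, P i j * c i j

noncomputable def northwestCoupling (a : Fin n → ℝ) (b : Fin m → ℝ)
    (i : Fin n) (j : Fin m) : ℝ :=
  volume.real (quantileCell a i ∩ quantileCell b j)

lemma IsProbVec.sum_measureReal_inter_quantileCell (hb : IsProbVec b) {s : Set ℝ}
    (hs : s ⊆ Set.Ioc 0 1) (hsm : MeasurableSet s) :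
    ∑ j, volume.real (s ∩ quantileCell b j) = volume.real s := by
  have hdisj : Pairwise (Function.onFun Disjoint fun j => s ∩ quantileCell b j) :=
    fun j j' hjj' => ((pairwise_disjoint_quantileCell hb.1 hjj').inter_left' s).inter_right' s
  have hfin : ∀ j, volume (s ∩ quantileCell b j) ≠ ⊤ := fun j =>
    ((measure_mono (Set.inter_subset_left.trans hs)).trans_lt measure_Ioc_lt_top).ne
  rw [← measureReal_iUnion_fintype hdisj (fun j => hsm.inter measurableSet_Ioc) hfin,
    ← Set.inter_iUnion, hb.iUnion_quantileCell, Set.inter_eq_left.2 hs]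

lemma northwestCoupling_mem (ha : IsProbVec a) (hb : IsProbVec b) :
    northwestCoupling a b ∈ transportPolytope a b := by
  refine ⟨fun i j => measureReal_nonneg, fun i => ?_, fun j => ?_⟩
  · rw [← volume_real_quantileCell ha.1 i]
    exact hb.sum_measureReal_inter_quantileCell (ha.quantileCell_subset i) measurableSet_Ioc
  · simp only [northwestCoupling, Set.inter_comm (quantileCell a _)]
    rw [← volume_real_quantileCell hb.1 j]
    exact ha.sum_measureReal_inter_quantileCell (hb.quantileCell_subset j) measurableSet_Ioc

lemma IsProbVec.iUnion_quantileCell_inter_quantileCell (ha : IsProbVec a) (hb : IsProbVec b) :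
    ⋃ ij : Fin n × Fin m, quantileCell a ij.1 ∩ quantileCell b ij.2 = Set.Ioc 0 1 := by
  rw [Set.iUnion_prod', ← Set.iUnion_inter_iUnion, ha.iUnion_quantileCell,
    hb.iUnion_quantileCell, Set.inter_self]

lemma setIntegral_Ioc_eq_transportCost_northwestCoupling (ha : IsProbVec a) (hb : IsProbVec b)
    {f : ℝ → ℝ} {c : Fin n → Fin m → ℝ}
    (hf : ∀ i j, ∀ u ∈ quantileCell a i ∩ quantileCell b j, f u = c i j) :
    ∫ u in Set.Ioc 0 1, f u = transportCost c (northwestCoupling a b) := by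
  let E : Fin n × Fin m → Set ℝ := fun ij => quantileCell a ij.1 ∩ quantileCell b ij.2
  have hmeas : ∀ ij, MeasurableSet (E ij) := fun _ => measurableSet_Ioc.inter measurableSet_Ioc
  have hdisj : Pairwise (Function.onFun Disjoint E) := by
    rintro ⟨i, j⟩ ⟨i', j'⟩ hne
    exact Set.disjoint_left.2 fun u hu hu' => hne <|
      Prod.ext (eq_of_mem_quantileCell ha.1 hu.1 hu'.1) (eq_of_mem_quantileCell hb.1 hu.2 hu'.2)
  have hint : ∀ ij, IntegrableOn f (E ij) := fun ij =>
    (integrableOn_congr_fun (hf ij.1 ij.2) (hmeas ij)).2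
      (integrableOn_const ((measure_mono Set.inter_subset_left).trans_lt measure_Ioc_lt_top).ne)
  rw [← ha.iUnion_quantileCell_inter_quantileCell hb, integral_iUnion_fintype hmeas hdisj hint,
    Fintype.sum_prod_type]
  refine sum_congr rfl fun i _ => sum_congr rfl fun j _ => ?_
  rw [setIntegral_congr_fun (hmeas (i, j)) (hf i j), setIntegral_const, smul_eq_mul]
  rfl

lemma integral_quantile_eq_transportCost (ha : IsProbVec a) (hb : IsProbVec b)
    {x : Fin n → ℝ} {y : Fin m → ℝ} (hx : Monotone x) (hy : Monotone y)
    (f : ℝ → ℝ → ℝ) :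
    ∫ u in Set.Ioo 0 1, f (quantile a x u) (quantile b y u)
      = transportCost (fun i j => f (x i) (y j)) (northwestCoupling a b) := by
  rw [← integral_Ioc_eq_integral_Ioo]
  refine setIntegral_Ioc_eq_transportCost_northwestCoupling ha hb fun i j u hu => ?_
  rw [quantile_eq_of_mem_quantileCell ha.1 hx hu.1, quantile_eq_of_mem_quantileCell hb.1 hy hu.2]

end Northwest

section MonotoneSupport

variable {a : Fin n → ℝ} {b : Fin m → ℝ} {P Q : Fin n → Fin m → ℝ}

def HasMonotoneSupport (P : Fin n → Fin m → ℝ) : Prop :=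
  ∀ ⦃i k j l⦄, i < k → 0 < P i j → 0 < P k l → j ≤ l

lemma northwestCoupling_hasMonotoneSupport (ha : ∀ i, 0 ≤ a i) (hb : ∀ j, 0 ≤ b j) :
    HasMonotoneSupport (northwestCoupling a b) := by
  intro i k j l hik hij hkl
  obtain ⟨u, hua, hub⟩ := nonempty_of_measureReal_ne_zero hij.ne'
  obtain ⟨v, hva, hvb⟩ := nonempty_of_measureReal_ne_zero hkl.ne'
  by_contra! hlj
  exact (lt_of_mem_quantileCell_of_lt ha hua hva hik).not_gt
    (lt_of_mem_quantileCell_of_lt hb hvb hub hlj)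

def cornerSum (P : Fin n → Fin m → ℝ) (i j : ℕ) : ℝ :=
  cumSum (fun i' => cumSum (P i') j) i

lemma entry_eq_cornerSum (P : Fin n → Fin m → ℝ) (i : Fin n) (j : Fin m) :
    P i j = cornerSum P (i + 1) (j + 1) - cornerSum P i (j + 1)
      - cornerSum P (i + 1) j + cornerSum P i j := by
  simp only [cornerSum, cumSum_succ (fun i' => cumSum (P i') _), cumSum_succ (P i)]
  ring

lemma cornerSum_transpose (P : Fin n → Fin m → ℝ) (i j : ℕ) :
    cornerSum P i j = cornerSum (fun j i => P i j) j i := by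
  simp only [cornerSum, cumSum, ← sum_filter]
  exact sum_comm

lemma transpose_mem_transportPolytope (hP : P ∈ transportPolytope a b) :
    (fun j i => P i j) ∈ transportPolytope b a :=
  ⟨fun j i => hP.1 i j, hP.2.2, hP.2.1⟩

lemma cornerSum_le_cumSum (hP : P ∈ transportPolytope a b) (i j : ℕ) :
    cornerSum P i j ≤ cumSum a i :=
  cumSum_le_cumSum fun i' => (hP.2.1 i').symm ▸ cumSum_le_sum (hP.1 i')

lemma cornerSum_eq_cumSum (hP : P ∈ transportPolytope a b) {i j : ℕ}
    (h : ∀ (i' : Fin n) (j' : Fin m), (i' : ℕ) < i → j ≤ j' → P i' j' = 0) :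
    cornerSum P i j = cumSum a i :=
  cumSum_congr fun i' hi' => (cumSum_eq_sum fun j' hj' => h i' j' hi' hj').trans (hP.2.1 i')

lemma HasMonotoneSupport.cornerSum_eq_min (hP : P ∈ transportPolytope a b)
    (hmono : HasMonotoneSupport P) (i j : ℕ) :
    cornerSum P i j = min (cumSum a i) (cumSum b j) := by
  have hle := cornerSum_le_cumSum (transpose_mem_transportPolytope hP) j i
  rw [← cornerSum_transpose] at hle
  -- Either the first `i` rows carry no mass from column `j` on, or some such entry is positive
  -- and then, by monotonicity, the first `j` columns carry no mass from row `i` on.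
  by_cases h : ∀ (i' : Fin n) (j' : Fin m), (i' : ℕ) < i → j ≤ j' → P i' j' = 0
  · rw [cornerSum_eq_cumSum hP h] at hle ⊢
    exact (min_eq_left hle).symm
  · push Not at h
    obtain ⟨i₁, j₁, hi₁, hj₁, hpos⟩ := h
    have h' : ∀ (j' : Fin m) (i' : Fin n), (j' : ℕ) < j → i ≤ i' → P i' j' = 0 := by
      intro j' i' hj' hi'
      by_contra hne
      have := hmono (Fin.lt_def.2 (hi₁.trans_le hi')) ((hP.1 _ _).lt_of_ne' hpos)
        ((hP.1 i' j').lt_of_ne' hne)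
      omega
    have := cornerSum_le_cumSum hP i j
    rw [cornerSum_transpose, cornerSum_eq_cumSum (transpose_mem_transportPolytope hP) h'] at this ⊢
    exact (min_eq_right this).symm

lemma HasMonotoneSupport.eq_of_mem (hP : P ∈ transportPolytope a b)
    (hQ : Q ∈ transportPolytope a b) (hPm : HasMonotoneSupport P) (hQm : HasMonotoneSupport Q) :
    P = Q := by
  funext i j
  rw [entry_eq_cornerSum P, entry_eq_cornerSum Q]
  simp only [hPm.cornerSum_eq_min hP, hQm.cornerSum_eq_min hQ]

end MonotoneSupport

section Uncross

variable {a : Fin n → ℝ} {b : Fin m → ℝ} {P : Fin n → Fin m → ℝ}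

def uncross (P : Fin n → Fin m → ℝ) (i k : Fin n) (j l : Fin m) (δ : ℝ) :
    Fin n → Fin m → ℝ :=
  P + δ • (Pi.single i (Pi.single l 1) + Pi.single k (Pi.single j 1)
    - Pi.single i (Pi.single j 1) - Pi.single k (Pi.single l 1))

lemma transportCost_uncross (c P : Fin n → Fin m → ℝ) (i k : Fin n) (j l : Fin m) (δ : ℝ) :
    transportCost c (uncross P i k j l δ)
      = transportCost c P + δ * (c i l + c k j - c i j - c k l) := by
  simp [transportCost, uncross, add_mul, sub_mul, sum_add_distrib, sum_sub_distrib,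
    Pi.single_apply, ite_apply, mul_assoc, ← mul_sum, ite_mul]

lemma uncross_mem (hP : P ∈ transportPolytope a b) {i k : Fin n} {j l : Fin m} (hik : i ≠ k)
    (hjl : j ≠ l) {δ : ℝ} (hδ : 0 ≤ δ) (hδij : δ ≤ P i j) (hδkl : δ ≤ P k l) :
    uncross P i k j l δ ∈ transportPolytope a b := by
  refine ⟨fun i' j' => ?_, fun i' => ?_, fun j' => ?_⟩
  · have := hP.1 i' j'
    simp only [uncross, Pi.add_apply, Pi.smul_apply, Pi.sub_apply, Pi.single_apply, ite_apply,
      Pi.zero_apply, smul_eq_mul]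
    split_ifs <;> subst_vars <;> simp_all <;> linarith
  · simp [uncross, sum_add_distrib, Pi.single_apply, ite_apply, ← mul_sum, hP.2.1 i']
  · simp [uncross, sum_add_distrib, Pi.single_apply, ite_apply, ← mul_sum, hP.2.2 j']

end Uncross

def IsMonge (c : Fin n → Fin m → ℝ) : Prop :=
  ∀ ⦃i k j l⦄, i < k → j < l → c i j + c k l ≤ c i l + c k j

lemma ConvexOn.map_add_map_le_of_add_eq {f : ℝ → ℝ} (hf : ConvexOn ℝ Set.univ f)
    {s t u v : ℝ} (hst : s ≤ t) (htv : t ≤ v) (h : s + v = t + u) :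
    f t + f u ≤ f s + f v := by
  obtain rfl : u = s + v - t := by linarith
  rcases (hst.trans htv).eq_or_lt with hsv | hsv
  · obtain rfl : t = s := le_antisymm (hsv ▸ htv) hst
    rw [← hsv, add_sub_cancel_right]
  set θ := (v - t) / (v - s)
  have hvs : 0 < v - s := sub_pos.2 hsv
  have hθ₀ : 0 ≤ θ := div_nonneg (sub_nonneg.2 htv) hvs.le
  have hθ₁ : θ ≤ 1 := (div_le_one hvs).2 (by linarith)
  have ht : θ • s + (1 - θ) • v = t := by
    simp only [smul_eq_mul, θ]; field_simp; ring
  have hu : (1 - θ) • s + θ • v = s + v - t := by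
    simp only [smul_eq_mul, θ]; field_simp; ring
  have h₁ := hf.2 (Set.mem_univ s) (Set.mem_univ v) hθ₀ (sub_nonneg.2 hθ₁) (by ring)
  have h₂ := hf.2 (Set.mem_univ s) (Set.mem_univ v) (sub_nonneg.2 hθ₁) hθ₀ (by ring)
  rw [ht] at h₁
  rw [hu] at h₂
  simp only [smul_eq_mul] at h₁ h₂
  linarith

lemma convexOn_abs_rpow {p : ℝ} (hp : 1 ≤ p) :
    ConvexOn ℝ Set.univ fun t : ℝ => |t| ^ p := by
  have himage : (fun t : ℝ => |t|) '' Set.univ = Set.Ici 0 := by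
    ext t
    exact ⟨fun ⟨s, _, hs⟩ => hs ▸ abs_nonneg s,
      fun ht => ⟨t, trivial, abs_of_nonneg ht⟩⟩
  have hconv : ConvexOn ℝ ((fun t : ℝ => |t|) '' Set.univ) fun s : ℝ => s ^ p :=
    himage ▸ convexOn_rpow hp
  have hmono : MonotoneOn (fun s : ℝ => s ^ p) ((fun t : ℝ => |t|) '' Set.univ) :=
    himage ▸ fun s hs _ _ hst => Real.rpow_le_rpow hs hst (zero_le_one.trans hp)
  exact hconv.comp (convexOn_univ_norm (E := ℝ)) hmono

lemma isMonge_abs_sub_rpow {x : Fin n → ℝ} {y : Fin m → ℝ} (hx : Monotone x)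
    (hy : Monotone y) {p : ℝ} (hp : 1 ≤ p) : IsMonge fun i j => |x i - y j| ^ p :=
  fun _ _ _ _ hik hjl => (convexOn_abs_rpow hp).map_add_map_le_of_add_eq
    (sub_le_sub_left (hy hjl.le) _) (sub_le_sub_right (hx hik.le) _) (by ring)

section Optimality

variable {a : Fin n → ℝ} {b : Fin m → ℝ} {c : Fin n → Fin m → ℝ}

lemma isCompact_transportPolytope (a : Fin n → ℝ) (b : Fin m → ℝ) :
    IsCompact (transportPolytope a b) := by
  have hclosed : IsClosed (transportPolytope a b) := by
    simp only [transportPolytope, Set.ofPred_and, Set.ofPred_forall]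
    refine .inter (isClosed_iInter fun i => isClosed_iInter fun j => ?_)
      (.inter (isClosed_iInter fun i => ?_) (isClosed_iInter fun j => ?_))
    · exact isClosed_le continuous_const (by fun_prop)
    · exact isClosed_eq (by fun_prop) continuous_const
    · exact isClosed_eq (by fun_prop) continuous_const
  refine (isCompact_Icc (a := 0) (b := fun i _ => a i)).of_isClosed_subset hclosed
    fun P hP => ⟨hP.1, fun i j => ?_⟩
  exact (single_le_sum (fun j' _ => hP.1 i j') (mem_univ j)).trans_eq (hP.2.1 i)

lemma continuous_transportCost (c : Fin n → Fin m → ℝ) : Continuous (transportCost c) := by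
  unfold transportCost
  fun_prop

lemma IsMonge.exists_isMinOn_hasMonotoneSupport (hc : IsMonge c) (ha : IsProbVec a)
    (hb : IsProbVec b) :
    ∃ R ∈ transportPolytope a b,
      IsMinOn (transportCost c) (transportPolytope a b) R ∧ HasMonotoneSupport R := by
  have hU := isCompact_transportPolytope a b
  obtain ⟨R₀, hR₀, hmin₀⟩ := hU.exists_isMinOn ⟨_, northwestCoupling_mem ha hb⟩
    (continuous_transportCost c).continuousOn
  let S := transportPolytope a b ∩ transportCost c ⁻¹' {transportCost c R₀}
  have hS : IsCompact S :=
    hU.inter_right (isClosed_singleton.preimage (continuous_transportCost c))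
  let w : Fin n → Fin m → ℝ := fun i j => -((i : ℝ) * j)
  obtain ⟨R, ⟨hRU, hRc : transportCost c R = transportCost c R₀⟩, hminR⟩ :=
    hS.exists_isMinOn ⟨R₀, hR₀, rfl⟩ (continuous_transportCost w).continuousOn
  refine ⟨R, hRU, fun P hP => hRc.symm ▸ hmin₀ hP, fun i k j l hik hij hkl => ?_⟩
  by_contra! hlj
  set δ := min (R i j) (R k l)
  have hδ : 0 < δ := lt_min hij hkl
  have hR' := uncross_mem hRU hik.ne hlj.ne' hδ.le (min_le_left _ _) (min_le_right _ _)
  have hc' : transportCost c (uncross R i k j l δ) ≤ transportCost c R := by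
    rw [transportCost_uncross]
    nlinarith [hc hik hlj]
  have hw : transportCost w (uncross R i k j l δ) < transportCost w R := by
    have hik' : (i : ℝ) < k := by exact_mod_cast hik
    have hlj' : (l : ℝ) < j := by exact_mod_cast hlj
    rw [transportCost_uncross]
    nlinarith [mul_pos (sub_pos.2 hik') (sub_pos.2 hlj')]
  exact hw.not_ge (hminR ⟨hR', le_antisymm (hc'.trans_eq hRc) (hmin₀ hR')⟩)

lemma IsMonge.isMinOn_northwestCoupling (hc : IsMonge c) (ha : IsProbVec a)
    (hb : IsProbVec b) :
    IsMinOn (transportCost c) (transportPolytope a b) (northwestCoupling a b) := by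
  obtain ⟨R, hR, hmin, hmono⟩ := hc.exists_isMinOn_hasMonotoneSupport ha hb
  rwa [hmono.eq_of_mem hR (northwestCoupling_mem ha hb)
    (northwestCoupling_hasMonotoneSupport ha.1 hb.1)] at hmin

end Optimality

theorem isLeast_transportCost_quantile {a : Fin n → ℝ} {b : Fin m → ℝ} (ha : IsProbVec a)
    (hb : IsProbVec b) {x : Fin n → ℝ} {y : Fin m → ℝ} (hx : Monotone x) (hy : Monotone y)
    {p : ℝ} (hp : 1 ≤ p) :
    IsLeast (transportCost (fun i j => |x i - y j| ^ p) '' transportPolytope a b)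
      (∫ u in Set.Ioo 0 1, |quantile a x u - quantile b y u| ^ p) := by
  rw [integral_quantile_eq_transportCost ha hb hx hy fun s t => |s - t| ^ p]
  exact ⟨Set.mem_image_of_mem _ (northwestCoupling_mem ha hb), Set.forall_mem_image.2
    fun _ hP => (isMonge_abs_sub_rpow hx hy hp).isMinOn_northwestCoupling ha hb hP⟩

section Relabel

variable {a x : Fin n → ℝ} {b : Fin m → ℝ} {P : Fin n → Fin m → ℝ}
  (σ : Equiv.Perm (Fin n)) (τ : Equiv.Perm (Fin m))

lemma IsProbVec.comp_equiv (ha : IsProbVec a) : IsProbVec (a ∘ σ) :=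
  ⟨fun i => ha.1 (σ i), (Equiv.sum_comp σ a).trans ha.2⟩

lemma quantile_comp_equiv : quantile (a ∘ σ) (x ∘ σ) = quantile a x := by
  funext u
  simp only [quantile, Function.comp_apply]
  congr! 3 with t
  rw [Equiv.sum_comp σ fun k => if x k ≤ t then a k else 0]

lemma reindex_mem_transportPolytope (hP : P ∈ transportPolytope a b) :
    (fun i j => P (σ i) (τ j)) ∈ transportPolytope (a ∘ σ) (b ∘ τ) :=
  ⟨fun _ _ => hP.1 _ _, fun i => (Equiv.sum_comp τ (P (σ i))).trans (hP.2.1 _),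
    fun j => (Equiv.sum_comp σ fun i => P i (τ j)).trans (hP.2.2 _)⟩

lemma transportPolytope_comp_equiv :
    transportPolytope (a ∘ σ) (b ∘ τ)
      = (fun P i j => P (σ i) (τ j)) '' transportPolytope a b := by
  refine subset_antisymm (fun Q hQ => ⟨fun i j => Q (σ.symm i) (τ.symm j), ?_, by simp⟩)
    (Set.image_subset_iff.2 fun P hP => reindex_mem_transportPolytope σ τ hP)
  simpa [Function.comp_assoc] using reindex_mem_transportPolytope σ.symm τ.symm hQ

lemma transportCost_reindex (c P : Fin n → Fin m → ℝ) :
    transportCost (fun i j => c (σ i) (τ j)) (fun i j => P (σ i) (τ j)) = transportCost c P :=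
  (Fintype.sum_congr _ _ fun i => Equiv.sum_comp τ fun j => P (σ i) j * c (σ i) j).trans
    (Equiv.sum_comp σ fun i => ∑ j, P i j * c i j)

lemma image_transportCost_comp_equiv (c : Fin n → Fin m → ℝ) :
    transportCost c '' transportPolytope a b
      = transportCost (fun i j => c (σ i) (τ j)) '' transportPolytope (a ∘ σ) (b ∘ τ) := by
  rw [transportPolytope_comp_equiv, Set.image_image]
  simp only [transportCost_reindex]

end Relabel

theorem stmt5_general (n m : ℕ)
    (a : Fin n → ℝ) (b : Fin m → ℝ) (ha : IsProbVec a) (hb : IsProbVec b)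
    (x : Fin n → ℝ) (y : Fin m → ℝ) (p : ℝ) (hp : 1 ≤ p)
    (F G : ℝ → ℝ)
    (hF : ∀ t, F t = ∑ i, if x i ≤ t then a i else 0)
    (hG : ∀ t, G t = ∑ j, if y j ≤ t then b j else 0)
    (Finv Ginv : ℝ → ℝ)
    (hFinv : ∀ u, Finv u = sInf {t : ℝ | u ≤ F t})
    (hGinv : ∀ u, Ginv u = sInf {t : ℝ | u ≤ G t}) :
    IsLeast ((fun P => ∑ i, ∑ j, P i j * |x i - y j| ^ p) '' transportPolytope a b)
      (∫ u in Set.Ioo (0 : ℝ) 1, |Finv u - Ginv u| ^ p) := by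
  obtain rfl : Finv = quantile a x := funext fun u => by simp only [hFinv, hF, quantile]
  obtain rfl : Ginv = quantile b y := funext fun u => by simp only [hGinv, hG, quantile]
  let σ := Tuple.sort x
  let τ := Tuple.sort y
  rw [← quantile_comp_equiv σ, ← quantile_comp_equiv τ]
  change IsLeast (transportCost (fun i j => |x i - y j| ^ p) '' _) _
  rw [image_transportCost_comp_equiv σ τ]
  exact isLeast_transportCost_quantile (ha.comp_equiv σ) (hb.comp_equiv τ)
    (Tuple.monotone_sort x) (Tuple.monotone_sort y) hp

theorem stmt5 (n m : ℕ) (hn : 1 ≤ n) (hm : 1 ≤ m)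
    (a : Fin n → ℝ) (b : Fin m → ℝ) (ha : IsProbVec a) (hb : IsProbVec b)
    (x : Fin n → ℝ) (y : Fin m → ℝ) (p : ℝ) (hp : 1 ≤ p)
    (F G : ℝ → ℝ)
    (hF : ∀ t, F t = ∑ i, if x i ≤ t then a i else 0)
    (hG : ∀ t, G t = ∑ j, if y j ≤ t then b j else 0)
    (Finv Ginv : ℝ → ℝ)
    (hFinv : ∀ u, Finv u = sInf {t : ℝ | u ≤ F t})
    (hGinv : ∀ u, Ginv u = sInf {t : ℝ | u ≤ G t}) :
    IsLeast ((fun P => ∑ i, ∑ j, P i j * |x i - y j| ^ p) '' transportPolytope a b)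
      (∫ u in Set.Ioo (0 : ℝ) 1, |Finv u - Ginv u| ^ p) :=
  stmt5_general n m a b ha hb x y p hp F G hF hG Finv Ginv hFinv hGinv
end

section
/- Let N ≥ 1 and for each r ∈ {1,…,N} let μ_r be a finitely supported probability measure on ℝ, given by a probability vector a^r ∈ ℝ^{n_r} and points x^r : {1,…,n_r} → ℝ. For r, s ∈ {1,…,N} let W₂²(r,s) denote the infimum over P ∈ U(a^r, a^s) of ∑_{i,j} P_{ij} (x^r_i − x^s_j)². Then W₂² is conditionally negative definite: for all c ∈ ℝ^N with ∑_{r=1}^N c_r = 0, one has ∑_{r=1}^N ∑_{s=1}^N c_r c_s W₂²(r,s) ≤ 0. -/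
open Finset

/-!
On the line the monotone coupling is optimal, so `W₂²(r, s) = ∫ (Q_r - Q_s)²` with `Q_r` the
quantile function of `μ_r`. Optimality is certified by explicit discrete Kantorovich potentials
for the cost `-2 x y`, which are tight exactly on the overlapping quantile cells. Pointwise in `t`,
`∑ c_r c_s (Q_r t - Q_s t)² = -2 (∑ c_r Q_r t)² ≤ 0` when `∑ c_r = 0`; integrating gives the claim.
-/

noncomputable section

open MeasureTheory Function

namespace DiscreteQuantile

section Cells

variable {b : ℕ → ℝ} {n k : ℕ} {t : ℝ}

def cumMass (b : ℕ → ℝ) (m : ℕ) : ℝ := ∑ k ∈ range m, b k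

@[simp] lemma cumMass_zero (b : ℕ → ℝ) : cumMass b 0 = 0 := sum_range_zero b

lemma cumMass_succ (b : ℕ → ℝ) (m : ℕ) : cumMass b (m + 1) = cumMass b m + b m :=
  sum_range_succ b m

lemma cumMass_mono (hb : ∀ k, 0 ≤ b k) : Monotone (cumMass b) := fun _ _ hij =>
  sum_le_sum_of_subset_of_nonneg (range_subset_range.2 hij) fun k _ _ => hb k

lemma cumMass_nonneg (hb : ∀ k, 0 ≤ b k) (m : ℕ) : 0 ≤ cumMass b m :=
  sum_nonneg fun k _ => hb k

def cell (b : ℕ → ℝ) (k : ℕ) : Set ℝ := Set.Ico (cumMass b k) (cumMass b (k + 1))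

lemma measurableSet_cell (b : ℕ → ℝ) (k : ℕ) : MeasurableSet (cell b k) := measurableSet_Ico

lemma volume_real_cell (hb : ∀ k, 0 ≤ b k) (k : ℕ) : volume.real (cell b k) = b k := by
  rw [cell, Real.volume_real_Ico, cumMass_succ, add_sub_cancel_left, max_eq_left (hb k)]

lemma cell_subset_Ico (hb : ∀ k, 0 ≤ b k) (hk : k < n) : cell b k ⊆ Set.Ico 0 (cumMass b n) :=
  Set.Ico_subset_Ico (cumMass_nonneg hb k) (cumMass_mono hb hk)

lemma pairwise_disjoint_cell (hb : ∀ k, 0 ≤ b k) : Pairwise (Disjoint on (cell b)) :=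
  (cumMass_mono hb).pairwise_disjoint_on_Ico_succ

/-- The index of the cell containing `t`, for `t ∈ [0, cumMass b n)`. -/
def quantileIndex (b : ℕ → ℝ) (n : ℕ) (t : ℝ) : ℕ :=
  Nat.findGreatest (fun m => cumMass b m ≤ t) (n - 1)

lemma quantileIndex_lt (hn : 0 < n) (b : ℕ → ℝ) (t : ℝ) : quantileIndex b n t < n :=
  (Nat.findGreatest_le _).trans_lt (Nat.sub_lt hn one_pos)

lemma quantileIndex_mono {t' : ℝ} (ht : 0 ≤ t) (htt' : t ≤ t') :
    quantileIndex b n t ≤ quantileIndex b n t' :=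
  Nat.le_findGreatest (Nat.findGreatest_le _)
    ((Nat.findGreatest_spec (P := fun m => cumMass b m ≤ t) (Nat.zero_le _)
      (by simpa using ht)).trans htt')

lemma quantileIndex_eq_of_mem_cell (hb : ∀ k, 0 ≤ b k) (hk : k < n) (ht : t ∈ cell b k) :
    quantileIndex b n t = k :=
  Nat.findGreatest_eq_iff.2 ⟨by omega, fun _ => ht.1, fun _ hm _ =>
    (ht.2.trans_le (cumMass_mono hb hm)).not_ge⟩

lemma mem_cell_quantileIndex (hb : ∀ k, 0 ≤ b k) (ht : t ∈ Set.Ico 0 (cumMass b n)) :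
    t ∈ cell b (quantileIndex b n t) := by
  refine ⟨Nat.findGreatest_spec (P := fun m => cumMass b m ≤ t) (Nat.zero_le _)
    (by simpa using ht.1), ?_⟩
  by_cases hq : quantileIndex b n t + 1 ≤ n - 1
  · by_contra! h
    exact Nat.findGreatest_is_greatest (Nat.lt_succ_self _) hq h
  · exact ht.2.trans_le (cumMass_mono hb (by omega))

lemma pos_of_mem_Ico_cumMass (ht : t ∈ Set.Ico 0 (cumMass b n)) : 0 < n := by
  rcases Nat.eq_zero_or_pos n with rfl | hn
  · simp only [cumMass_zero, Set.mem_Ico] at ht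
    linarith [ht.1, ht.2]
  · exact hn

lemma sum_indicator_cell (hb : ∀ k, 0 ≤ b k) (G : ℕ → ℝ → ℝ) (t : ℝ) :
    ∑ k ∈ range n, (cell b k).indicator (G k) t =
      (Set.Ico 0 (cumMass b n)).indicator (fun t => G (quantileIndex b n t) t) t := by
  by_cases ht : t ∈ Set.Ico 0 (cumMass b n)
  · rw [Set.indicator_of_mem ht, sum_eq_single_of_mem _
      (mem_range.2 (quantileIndex_lt (pos_of_mem_Ico_cumMass ht) b t)),
      Set.indicator_of_mem (mem_cell_quantileIndex hb ht)]
    intro k hk hne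
    exact Set.indicator_of_notMem
      (fun h => hne (quantileIndex_eq_of_mem_cell hb (mem_range.1 hk) h).symm) _
  · rw [Set.indicator_of_notMem ht]
    exact sum_eq_zero fun k hk =>
      Set.indicator_of_notMem (fun h => ht (cell_subset_Ico hb (mem_range.1 hk) h)) _

lemma biUnion_cell (hb : ∀ k, 0 ≤ b k) :
    ⋃ k ∈ range n, cell b k = Set.Ico 0 (cumMass b n) := by
  refine Set.Subset.antisymm (Set.iUnion₂_subset fun k hk => cell_subset_Ico hb (mem_range.1 hk))
    fun t ht => Set.mem_biUnion (mem_range.2 (quantileIndex_lt (pos_of_mem_Ico_cumMass ht) b t))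
      (mem_cell_quantileIndex hb ht)

end Cells

section Coupling

variable {b₁ b₂ : ℕ → ℝ} {n₁ n₂ k l m : ℕ} {t : ℝ}

lemma quantileIndex_cumMass_le_of_lt (hb₁ : ∀ k, 0 ≤ b₁ k) (hb₂ : ∀ k, 0 ≤ b₂ k) (hk : k < n₁)
    (ht : t ∈ cell b₁ k ∩ cell b₂ l) (hm : m < l) :
    quantileIndex b₁ n₁ (cumMass b₂ (m + 1)) ≤ k :=
  quantileIndex_eq_of_mem_cell hb₁ hk ht.1 ▸ quantileIndex_mono (cumMass_nonneg hb₂ _)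
    ((cumMass_mono hb₂ hm).trans ht.2.1)

lemma le_quantileIndex_cumMass_of_le (hb₁ : ∀ k, 0 ≤ b₁ k) (hb₂ : ∀ k, 0 ≤ b₂ k) (hk : k < n₁)
    (ht : t ∈ cell b₁ k ∩ cell b₂ l) (hm : l ≤ m) :
    k ≤ quantileIndex b₁ n₁ (cumMass b₂ (m + 1)) :=
  quantileIndex_eq_of_mem_cell hb₁ hk ht.1 ▸
    quantileIndex_mono ((cumMass_nonneg hb₁ k).trans ht.1.1)
    (ht.2.2.le.trans (cumMass_mono hb₂ (Nat.succ_le_succ hm)))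

/-- The comonotone coupling: atom `k` of the first measure sends to atom `l` of the second the
length of the overlap of their quantile cells. -/
def coupling (b₁ b₂ : ℕ → ℝ) (k l : ℕ) : ℝ := volume.real (cell b₁ k ∩ cell b₂ l)

lemma coupling_nonneg : 0 ≤ coupling b₁ b₂ k l := measureReal_nonneg

lemma coupling_comm : coupling b₁ b₂ k l = coupling b₂ b₁ l k := by
  rw [coupling, coupling, Set.inter_comm]

lemma volume_cell_inter_ne_top (b₁ b₂ : ℕ → ℝ) (k l : ℕ) :
    volume (cell b₁ k ∩ cell b₂ l) ≠ ⊤ :=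
  ((measure_mono Set.inter_subset_left).trans_lt measure_Ico_lt_top).ne

lemma nonempty_of_coupling_ne_zero (h : coupling b₁ b₂ k l ≠ 0) :
    (cell b₁ k ∩ cell b₂ l).Nonempty := by
  by_contra hs
  simp [coupling, Set.not_nonempty_iff_eq_empty.1 hs] at h

lemma sum_coupling_right (hb₁ : ∀ k, 0 ≤ b₁ k) (hb₂ : ∀ k, 0 ≤ b₂ k) (hk : k < n₁)
    (h : cumMass b₁ n₁ ≤ cumMass b₂ n₂) : ∑ l ∈ range n₂, coupling b₁ b₂ k l = b₁ k := by
  have hdisj : (range n₂ : Set ℕ).PairwiseDisjoint fun l => cell b₁ k ∩ cell b₂ l :=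
    fun l _ l' _ hll' =>
      (pairwise_disjoint_cell hb₂ hll').mono Set.inter_subset_right Set.inter_subset_right
  unfold coupling
  rw [← measureReal_biUnion_finset hdisj
      (fun l _ => (measurableSet_cell b₁ k).inter (measurableSet_cell b₂ l))
      (fun l _ => volume_cell_inter_ne_top b₁ b₂ k l),
    ← Set.inter_iUnion₂, biUnion_cell hb₂,
    Set.inter_eq_left.2 ((cell_subset_Ico hb₁ hk).trans (Set.Ico_subset_Ico_right h)),
    volume_real_cell hb₁]

lemma sum_coupling_left (hb₁ : ∀ k, 0 ≤ b₁ k) (hb₂ : ∀ k, 0 ≤ b₂ k) (hl : l < n₂)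
    (h : cumMass b₂ n₂ ≤ cumMass b₁ n₁) : ∑ k ∈ range n₁, coupling b₁ b₂ k l = b₂ l := by
  simp_rw [coupling_comm (b₁ := b₁)]
  exact sum_coupling_right hb₂ hb₁ hl h

end Coupling

section Quantile

variable {b₁ b₂ y₁ y₂ : ℕ → ℝ} {n₁ n₂ : ℕ}

/-- The quantile function of `∑ k < n, b k • δ (y k)`, provided `y` is monotone on `[0, n)`. -/
def quantile (n : ℕ) (b y : ℕ → ℝ) (t : ℝ) : ℝ :=
  ∑ k ∈ range n, (cell b k).indicator (fun _ => y k) t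

lemma integrable_indicator_cell_inter (b₁ b₂ : ℕ → ℝ) (k l : ℕ) (c : ℝ) :
    Integrable fun t => (cell b₁ k ∩ cell b₂ l).indicator (fun _ => c) t :=
  (integrableOn_const (volume_cell_inter_ne_top b₁ b₂ k l)).integrable_indicator
    ((measurableSet_cell b₁ k).inter (measurableSet_cell b₂ l))

lemma sq_sub_quantile (hb₁ : ∀ k, 0 ≤ b₁ k) (hb₂ : ∀ k, 0 ≤ b₂ k)
    (h : cumMass b₁ n₁ = cumMass b₂ n₂) (t : ℝ) :
    (quantile n₁ b₁ y₁ t - quantile n₂ b₂ y₂ t) ^ 2 =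
      ∑ k ∈ range n₁, ∑ l ∈ range n₂,
        (cell b₁ k ∩ cell b₂ l).indicator (fun _ => (y₁ k - y₂ l) ^ 2) t := by
  simp_rw [← Set.indicator_indicator, ← Finset.sum_apply, ← Finset.indicator_sum]
  simp only [Finset.sum_apply, quantile, sum_indicator_cell hb₁, sum_indicator_cell hb₂, h]
  by_cases ht : t ∈ Set.Ico 0 (cumMass b₂ n₂) <;> simp [ht]

lemma integrable_sq_sub_quantile (hb₁ : ∀ k, 0 ≤ b₁ k) (hb₂ : ∀ k, 0 ≤ b₂ k)
    (h : cumMass b₁ n₁ = cumMass b₂ n₂) :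
    Integrable fun t => (quantile n₁ b₁ y₁ t - quantile n₂ b₂ y₂ t) ^ 2 := by
  simp_rw [sq_sub_quantile hb₁ hb₂ h]
  exact integrable_finsetSum _ fun k _ => integrable_finsetSum _ fun l _ =>
    integrable_indicator_cell_inter b₁ b₂ k l _

lemma integral_sq_sub_quantile (hb₁ : ∀ k, 0 ≤ b₁ k) (hb₂ : ∀ k, 0 ≤ b₂ k)
    (h : cumMass b₁ n₁ = cumMass b₂ n₂) :
    ∫ t, (quantile n₁ b₁ y₁ t - quantile n₂ b₂ y₂ t) ^ 2 =
      ∑ k ∈ range n₁, ∑ l ∈ range n₂, coupling b₁ b₂ k l * (y₁ k - y₂ l) ^ 2 := by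
  simp_rw [sq_sub_quantile hb₁ hb₂ h]
  rw [integral_finsetSum _ fun k _ => integrable_finsetSum _ fun l _ =>
    integrable_indicator_cell_inter b₁ b₂ k l _]
  refine sum_congr rfl fun k _ => ?_
  rw [integral_finsetSum _ fun l _ => integrable_indicator_cell_inter b₁ b₂ k l _]
  refine sum_congr rfl fun l _ => ?_
  rw [integral_indicator_const _ ((measurableSet_cell b₁ k).inter (measurableSet_cell b₂ l)),
    smul_eq_mul, coupling]

end Quantile

section Potentials

variable (n₁ n₂ : ℕ) (b₁ b₂ y₁ y₂ : ℕ → ℝ)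

/-- Kantorovich potentials for the cost `-2 y₁ y₂`: `potentialSnd` integrates the first quantile
function, sampled at the right ends of the second measure's cells, against the increments of
`y₂`, and `potentialFst` is its discrete Legendre transform. -/
def potentialSnd (l : ℕ) : ℝ :=
  2 * ∑ m ∈ range l, y₁ (quantileIndex b₁ n₁ (cumMass b₂ (m + 1))) * (y₂ (m + 1) - y₂ m)

def potentialFst (k : ℕ) : ℝ :=
  ⨆ l : Fin n₂, 2 * y₁ k * y₂ l - potentialSnd n₁ b₁ b₂ y₁ y₂ l

variable {n₁ n₂ b₁ b₂ y₁ y₂} {k l : ℕ}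

lemma mul_le_potentialFst_add (k : ℕ) (hl : l < n₂) :
    2 * y₁ k * y₂ l ≤ potentialFst n₁ n₂ b₁ b₂ y₁ y₂ k + potentialSnd n₁ b₁ b₂ y₁ y₂ l := by
  rw [← sub_le_iff_le_add]
  exact le_ciSup (f := fun l : Fin n₂ => 2 * y₁ k * y₂ l - potentialSnd n₁ b₁ b₂ y₁ y₂ l)
    (Finite.bddAbove_range _) ⟨l, hl⟩

lemma potentialSnd_succ (m : ℕ) :
    potentialSnd n₁ b₁ b₂ y₁ y₂ (m + 1) = potentialSnd n₁ b₁ b₂ y₁ y₂ m +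
      2 * y₁ (quantileIndex b₁ n₁ (cumMass b₂ (m + 1))) * (y₂ (m + 1) - y₂ m) := by
  rw [potentialSnd, potentialSnd, sum_range_succ]
  ring

variable (hb₁ : ∀ k, 0 ≤ b₁ k) (hb₂ : ∀ k, 0 ≤ b₂ k)
  (hy₁ : MonotoneOn y₁ (Set.Iio n₁)) (hy₂ : MonotoneOn y₂ (Set.Iio n₂))
include hb₁ hb₂ hy₁ hy₂

/-- On overlapping cells `k`, `l`, the index `l` maximises `l' ↦ 2 y₁ k y₂ l' - potentialSnd l'`:
the increments of this function are `2 (y₁ k - Q₁(F₂ (m + 1))) (y₂ (m + 1) - y₂ m)`, whose sign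
changes exactly at `l`. -/
lemma mul_sub_potentialSnd_le (hk : k < n₁) (hl : l < n₂) {t : ℝ}
    (ht : t ∈ cell b₁ k ∩ cell b₂ l) {l' : ℕ} (hl' : l' < n₂) :
    2 * y₁ k * y₂ l' - potentialSnd n₁ b₁ b₂ y₁ y₂ l' ≤
      2 * y₁ k * y₂ l - potentialSnd n₁ b₁ b₂ y₁ y₂ l := by
  set u : ℕ → ℝ := fun m => 2 * y₁ k * y₂ m - potentialSnd n₁ b₁ b₂ y₁ y₂ m
  set ρ : ℕ → ℝ := fun m => y₁ (quantileIndex b₁ n₁ (cumMass b₂ (m + 1)))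
  have hstep : ∀ m, u (m + 1) - u m = 2 * (y₁ k - ρ m) * (y₂ (m + 1) - y₂ m) := fun m => by
    simp only [u, ρ, potentialSnd_succ]
    ring
  have hy₂step : ∀ m, m + 1 < n₂ → 0 ≤ y₂ (m + 1) - y₂ m := fun m hm =>
    sub_nonneg.2 (hy₂ (show m < n₂ by omega) hm (Nat.le_succ m))
  have hρ_mem : ∀ m, quantileIndex b₁ n₁ (cumMass b₂ (m + 1)) ∈ Set.Iio n₁ := fun m =>
    quantileIndex_lt (by omega) b₁ _
  have hρ_le : ∀ m < l, ρ m ≤ y₁ k := fun m hm =>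
    hy₁ (hρ_mem m) hk (quantileIndex_cumMass_le_of_lt hb₁ hb₂ hk ht hm)
  have hle_ρ : ∀ m, l ≤ m → y₁ k ≤ ρ m := fun m hm =>
    hy₁ hk (hρ_mem m) (le_quantileIndex_cumMass_of_le hb₁ hb₂ hk ht hm)
  have hup : MonotoneOn u (Set.Iic l) :=
    monotoneOn_of_le_add_one Set.ordConnected_Iic fun m _ _ hm => by
      have := hstep m
      nlinarith [hρ_le m hm, hy₂step m ((Set.mem_Iic.1 hm).trans_lt hl)]
  have hdown : AntitoneOn u (Set.Ico l n₂) :=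
    antitoneOn_of_add_one_le Set.ordConnected_Ico fun m _ hm hm' => by
      have := hstep m
      nlinarith [hle_ρ m hm.1, hy₂step m hm'.2]
  rcases le_total l' l with h | h
  · exact hup (Set.mem_Iic.2 h) (Set.mem_Iic.2 le_rfl) h
  · exact hdown ⟨le_rfl, hl⟩ ⟨h, hl'⟩ h

lemma potentialFst_add_eq (hk : k < n₁) (hl : l < n₂) {t : ℝ}
    (ht : t ∈ cell b₁ k ∩ cell b₂ l) :
    potentialFst n₁ n₂ b₁ b₂ y₁ y₂ k + potentialSnd n₁ b₁ b₂ y₁ y₂ l = 2 * y₁ k * y₂ l := by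
  have : Nonempty (Fin n₂) := ⟨⟨l, hl⟩⟩
  refine le_antisymm ?_ (mul_le_potentialFst_add k hl)
  rw [← le_sub_iff_add_le]
  exact ciSup_le fun l' => mul_sub_potentialSnd_le hb₁ hb₂ hy₁ hy₂ hk hl ht l'.isLt

lemma sum_mul_potential (hc : cumMass b₁ n₁ = cumMass b₂ n₂) :
    ∑ k ∈ range n₁, b₁ k * (y₁ k ^ 2 - potentialFst n₁ n₂ b₁ b₂ y₁ y₂ k) +
        ∑ l ∈ range n₂, b₂ l * (y₂ l ^ 2 - potentialSnd n₁ b₁ b₂ y₁ y₂ l) =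
      ∑ k ∈ range n₁, ∑ l ∈ range n₂, coupling b₁ b₂ k l * (y₁ k - y₂ l) ^ 2 := by
  have hrow : ∀ X : ℕ → ℝ, ∑ k ∈ range n₁, b₁ k * X k =
      ∑ k ∈ range n₁, ∑ l ∈ range n₂, coupling b₁ b₂ k l * X k := fun X =>
    sum_congr rfl fun k hk => by
      rw [← sum_mul, sum_coupling_right hb₁ hb₂ (mem_range.1 hk) hc.le]
  have hcol : ∀ Y : ℕ → ℝ, ∑ l ∈ range n₂, b₂ l * Y l =
      ∑ k ∈ range n₁, ∑ l ∈ range n₂, coupling b₁ b₂ k l * Y l := fun Y => by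
    rw [sum_comm]
    exact sum_congr rfl fun l hl => by
      rw [← sum_mul, sum_coupling_left hb₁ hb₂ (mem_range.1 hl) hc.ge]
  rw [hrow, hcol, ← sum_add_distrib]
  refine sum_congr rfl fun k hk => ?_
  rw [← sum_add_distrib]
  refine sum_congr rfl fun l hl => ?_
  by_cases hL : coupling b₁ b₂ k l = 0
  · simp [hL]
  obtain ⟨t, ht⟩ := nonempty_of_coupling_ne_zero hL
  linear_combination (-coupling b₁ b₂ k l) *
    potentialFst_add_eq hb₁ hb₂ hy₁ hy₂ (mem_range.1 hk) (mem_range.1 hl) ht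

end Potentials

section Transport

variable {n₁ n₂ : ℕ} {a₁ : Fin n₁ → ℝ} {a₂ : Fin n₂ → ℝ}

lemma sum_mul_add_sum_mul_le_of_mem_transportPolytope {P : Fin n₁ → Fin n₂ → ℝ}
    (hP : P ∈ transportPolytope a₁ a₂) {φ : Fin n₁ → ℝ} {ψ : Fin n₂ → ℝ}
    {C : Fin n₁ → Fin n₂ → ℝ} (h : ∀ i j, φ i + ψ j ≤ C i j) :
    ∑ i, a₁ i * φ i + ∑ j, a₂ j * ψ j ≤ ∑ i, ∑ j, P i j * C i j := by
  obtain ⟨hP₀, hrow, hcol⟩ := hP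
  calc ∑ i, a₁ i * φ i + ∑ j, a₂ j * ψ j = ∑ i, ∑ j, P i j * (φ i + ψ j) := by
        simp only [mul_add, sum_add_distrib, ← sum_mul, hrow]
        rw [sum_comm (f := fun i j => P i j * ψ j)]
        simp only [← sum_mul, hcol]
    _ ≤ ∑ i, ∑ j, P i j * C i j :=
        sum_le_sum fun i _ => sum_le_sum fun j _ => mul_le_mul_of_nonneg_left (h i j) (hP₀ i j)

lemma sum_equiv_eq_sum_range {M : Type*} [AddCommMonoid M] {n : ℕ} (e : Fin n ≃ Fin n)
    (h : ℕ → M) : ∑ i, h (e i) = ∑ k ∈ range n, h k := by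
  rw [Equiv.sum_comp e (fun i => h i), Fin.sum_univ_eq_sum_range]

lemma sum_sum_equiv_eq_sum_range {M : Type*} [AddCommMonoid M] (e₁ : Fin n₁ ≃ Fin n₁)
    (e₂ : Fin n₂ ≃ Fin n₂) (h : ℕ → ℕ → M) :
    ∑ i, ∑ j, h (e₁ i) (e₂ j) = ∑ k ∈ range n₁, ∑ l ∈ range n₂, h k l := by
  rw [sum_equiv_eq_sum_range e₁ fun k => ∑ j, h k (e₂ j)]
  exact sum_congr rfl fun k _ => sum_equiv_eq_sum_range e₂ (h k)

variable {b₁ b₂ y₁ y₂ : ℕ → ℝ} {x₁ : Fin n₁ → ℝ} {x₂ : Fin n₂ → ℝ}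
  (e₁ : Fin n₁ ≃ Fin n₁) (e₂ : Fin n₂ ≃ Fin n₂)

lemma coupling_mem_transportPolytope (ha₁ : ∀ i, a₁ i = b₁ (e₁ i)) (ha₂ : ∀ j, a₂ j = b₂ (e₂ j))
    (hb₁ : ∀ k, 0 ≤ b₁ k) (hb₂ : ∀ k, 0 ≤ b₂ k) (hc : cumMass b₁ n₁ = cumMass b₂ n₂) :
    (fun i j => coupling b₁ b₂ (e₁ i) (e₂ j)) ∈ transportPolytope a₁ a₂ := by
  refine ⟨fun i j => coupling_nonneg, fun i => ?_, fun j => ?_⟩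
  · rw [sum_equiv_eq_sum_range e₂ (coupling b₁ b₂ (e₁ i)),
      sum_coupling_right hb₁ hb₂ (e₁ i).isLt hc.le, ha₁]
  · rw [sum_equiv_eq_sum_range e₁ fun k => coupling b₁ b₂ k (e₂ j),
      sum_coupling_left hb₁ hb₂ (e₂ j).isLt hc.ge, ha₂]

lemma sum_coupling_mul_le_of_mem_transportPolytope
    (ha₁ : ∀ i, a₁ i = b₁ (e₁ i)) (ha₂ : ∀ j, a₂ j = b₂ (e₂ j))
    (hx₁ : ∀ i, x₁ i = y₁ (e₁ i)) (hx₂ : ∀ j, x₂ j = y₂ (e₂ j))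
    (hb₁ : ∀ k, 0 ≤ b₁ k) (hb₂ : ∀ k, 0 ≤ b₂ k)
    (hy₁ : MonotoneOn y₁ (Set.Iio n₁)) (hy₂ : MonotoneOn y₂ (Set.Iio n₂))
    (hc : cumMass b₁ n₁ = cumMass b₂ n₂) {P : Fin n₁ → Fin n₂ → ℝ}
    (hP : P ∈ transportPolytope a₁ a₂) :
    ∑ k ∈ range n₁, ∑ l ∈ range n₂, coupling b₁ b₂ k l * (y₁ k - y₂ l) ^ 2 ≤
      ∑ i, ∑ j, P i j * (x₁ i - x₂ j) ^ 2 := by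
  set f := potentialFst n₁ n₂ b₁ b₂ y₁ y₂
  set g := potentialSnd n₁ b₁ b₂ y₁ y₂
  have hfeas : ∀ i j, (x₁ i ^ 2 - f (e₁ i)) + (x₂ j ^ 2 - g (e₂ j)) ≤ (x₁ i - x₂ j) ^ 2 :=
    fun i j => by
      have : 2 * y₁ (e₁ i) * y₂ (e₂ j) ≤ f (e₁ i) + g (e₂ j) :=
        mul_le_potentialFst_add _ (e₂ j).isLt
      rw [hx₁, hx₂]
      nlinarith
  calc ∑ k ∈ range n₁, ∑ l ∈ range n₂, coupling b₁ b₂ k l * (y₁ k - y₂ l) ^ 2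
      = ∑ k ∈ range n₁, b₁ k * (y₁ k ^ 2 - f k) + ∑ l ∈ range n₂, b₂ l * (y₂ l ^ 2 - g l) :=
        (sum_mul_potential hb₁ hb₂ hy₁ hy₂ hc).symm
    _ = ∑ i, a₁ i * (x₁ i ^ 2 - f (e₁ i)) + ∑ j, a₂ j * (x₂ j ^ 2 - g (e₂ j)) := by
        simp only [ha₁, ha₂, hx₁, hx₂]
        rw [sum_equiv_eq_sum_range e₁ fun k => b₁ k * (y₁ k ^ 2 - f k),
          sum_equiv_eq_sum_range e₂ fun l => b₂ l * (y₂ l ^ 2 - g l)]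
    _ ≤ ∑ i, ∑ j, P i j * (x₁ i - x₂ j) ^ 2 :=
        sum_mul_add_sum_mul_le_of_mem_transportPolytope hP hfeas

theorem isLeast_transportCost
    (ha₁ : ∀ i, a₁ i = b₁ (e₁ i)) (ha₂ : ∀ j, a₂ j = b₂ (e₂ j))
    (hx₁ : ∀ i, x₁ i = y₁ (e₁ i)) (hx₂ : ∀ j, x₂ j = y₂ (e₂ j))
    (hb₁ : ∀ k, 0 ≤ b₁ k) (hb₂ : ∀ k, 0 ≤ b₂ k)
    (hy₁ : MonotoneOn y₁ (Set.Iio n₁)) (hy₂ : MonotoneOn y₂ (Set.Iio n₂))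
    (hc : cumMass b₁ n₁ = cumMass b₂ n₂) :
    IsLeast ((fun P => ∑ i, ∑ j, P i j * (x₁ i - x₂ j) ^ 2) '' transportPolytope a₁ a₂)
      (∑ k ∈ range n₁, ∑ l ∈ range n₂, coupling b₁ b₂ k l * (y₁ k - y₂ l) ^ 2) := by
  refine ⟨⟨_, coupling_mem_transportPolytope e₁ e₂ ha₁ ha₂ hb₁ hb₂ hc, ?_⟩, ?_⟩
  · simp only [hx₁, hx₂]
    exact sum_sum_equiv_eq_sum_range e₁ e₂ fun k l => coupling b₁ b₂ k l * (y₁ k - y₂ l) ^ 2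
  · rintro _ ⟨P, hP, rfl⟩
    exact sum_coupling_mul_le_of_mem_transportPolytope e₁ e₂ ha₁ ha₂ hx₁ hx₂ hb₁ hb₂ hy₁ hy₂ hc hP

end Transport

section Sorted

variable {n : ℕ}

def extendSorted (x v : Fin n → ℝ) : ℕ → ℝ := Function.extend Fin.val (v ∘ Tuple.sort x) 0

lemma extendSorted_val (x v : Fin n → ℝ) (i : Fin n) :
    extendSorted x v i = v (Tuple.sort x i) :=
  Fin.val_injective.extend_apply _ _ i

lemma extendSorted_sort_symm (x v : Fin n → ℝ) (i : Fin n) :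
    extendSorted x v ((Tuple.sort x).symm i) = v i := by
  rw [extendSorted_val, Equiv.apply_symm_apply]

lemma extendSorted_nonneg {x v : Fin n → ℝ} (hv : ∀ i, 0 ≤ v i) (k : ℕ) :
    0 ≤ extendSorted x v k := by
  by_cases hk : ∃ i : Fin n, (i : ℕ) = k
  · obtain ⟨i, rfl⟩ := hk
    exact extendSorted_val x v i ▸ hv _
  · rw [extendSorted, Function.extend_apply' _ _ _ hk, Pi.zero_apply]

lemma monotoneOn_extendSorted (x : Fin n → ℝ) : MonotoneOn (extendSorted x x) (Set.Iio n) :=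
  fun k hk k' hk' hkk' => by
    rw [← Fin.val_mk hk, ← Fin.val_mk hk', extendSorted_val, extendSorted_val]
    exact Tuple.monotone_sort x (Fin.mk_le_mk.2 hkk')

lemma cumMass_extendSorted (x v : Fin n → ℝ) : cumMass (extendSorted x v) n = ∑ i, v i := by
  rw [cumMass, ← sum_equiv_eq_sum_range (Tuple.sort x).symm]
  exact sum_congr rfl fun i _ => extendSorted_sort_symm x v i

def quantileFun (a x : Fin n → ℝ) : ℝ → ℝ := quantile n (extendSorted x a) (extendSorted x x)

end Sorted

variable {n₁ n₂ : ℕ} {a₁ : Fin n₁ → ℝ} {a₂ : Fin n₂ → ℝ}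

lemma cumMass_extendSorted_eq (ha₁ : IsProbVec a₁) (ha₂ : IsProbVec a₂)
    (x₁ : Fin n₁ → ℝ) (x₂ : Fin n₂ → ℝ) :
    cumMass (extendSorted x₁ a₁) n₁ = cumMass (extendSorted x₂ a₂) n₂ := by
  rw [cumMass_extendSorted, cumMass_extendSorted, ha₁.2, ha₂.2]

theorem sInf_transportCost_eq_integral (ha₁ : IsProbVec a₁) (ha₂ : IsProbVec a₂)
    (x₁ : Fin n₁ → ℝ) (x₂ : Fin n₂ → ℝ) :
    sInf ((fun P => ∑ i, ∑ j, P i j * (x₁ i - x₂ j) ^ 2) '' transportPolytope a₁ a₂) =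
      ∫ t, (quantileFun a₁ x₁ t - quantileFun a₂ x₂ t) ^ 2 := by
  have hc := cumMass_extendSorted_eq ha₁ ha₂ x₁ x₂
  have hb₁ := extendSorted_nonneg (x := x₁) ha₁.1
  have hb₂ := extendSorted_nonneg (x := x₂) ha₂.1
  rw [(isLeast_transportCost (Tuple.sort x₁).symm (Tuple.sort x₂).symm
    (fun i => (extendSorted_sort_symm x₁ a₁ i).symm)
    (fun j => (extendSorted_sort_symm x₂ a₂ j).symm)
    (fun i => (extendSorted_sort_symm x₁ x₁ i).symm)
    (fun j => (extendSorted_sort_symm x₂ x₂ j).symm) hb₁ hb₂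
    (monotoneOn_extendSorted x₁) (monotoneOn_extendSorted x₂) hc).csInf_eq,
    quantileFun, quantileFun, integral_sq_sub_quantile hb₁ hb₂ hc]

lemma integrable_sq_sub_quantileFun (ha₁ : IsProbVec a₁) (ha₂ : IsProbVec a₂)
    (x₁ : Fin n₁ → ℝ) (x₂ : Fin n₂ → ℝ) :
    Integrable fun t => (quantileFun a₁ x₁ t - quantileFun a₂ x₂ t) ^ 2 :=
  integrable_sq_sub_quantile (extendSorted_nonneg ha₁.1) (extendSorted_nonneg ha₂.1)
    (cumMass_extendSorted_eq ha₁ ha₂ x₁ x₂)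

end DiscreteQuantile

end

lemma sum_sum_mul_mul_sq_sub {ι R : Type*} [Fintype ι] [CommRing R] {c : ι → R}
    (hc : ∑ i, c i = 0) (q : ι → R) :
    ∑ i, ∑ j, c i * c j * (q i - q j) ^ 2 = -2 * (∑ i, c i * q i) ^ 2 := by
  have expand : ∀ i j, c i * c j * (q i - q j) ^ 2 =
      c j * (c i * q i ^ 2) + c i * (c j * q j ^ 2) - 2 * (c i * q i) * (c j * q j) :=
    fun i j => by ring
  simp only [expand, sum_add_distrib, sum_sub_distrib, ← mul_sum, ← sum_mul, hc]
  ring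

open MeasureTheory DiscreteQuantile

theorem stmt8_general (N : ℕ)
    (n : Fin N → ℕ)
    (a : (r : Fin N) → Fin (n r) → ℝ) (ha : ∀ r, IsProbVec (a r))
    (x : (r : Fin N) → Fin (n r) → ℝ)
    (W2sq : Fin N → Fin N → ℝ)
    (hW : ∀ r s, W2sq r s =
      sInf ((fun P => ∑ i, ∑ j, P i j * (x r i - x s j) ^ 2) ''
        transportPolytope (a r) (a s)))
    (c : Fin N → ℝ) (hc : ∑ r, c r = 0) :
    ∑ r, ∑ s, c r * c s * W2sq r s ≤ 0 := by
  set Q := fun r => quantileFun (a r) (x r)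
  have hW' : ∀ r s, W2sq r s = ∫ t, (Q r t - Q s t) ^ 2 := fun r s =>
    (hW r s).trans (sInf_transportCost_eq_integral (ha r) (ha s) (x r) (x s))
  have hint : ∀ r s, Integrable fun t => c r * c s * (Q r t - Q s t) ^ 2 := fun r s =>
    (integrable_sq_sub_quantileFun (ha r) (ha s) (x r) (x s)).const_mul _
  calc ∑ r, ∑ s, c r * c s * W2sq r s
      = ∫ t, ∑ r, ∑ s, c r * c s * (Q r t - Q s t) ^ 2 := by
        rw [integral_finsetSum _ fun r _ => integrable_finsetSum _ fun s _ => hint r s]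
        refine sum_congr rfl fun r _ => ?_
        rw [integral_finsetSum _ fun s _ => hint r s]
        simp only [hW', integral_const_mul]
    _ = ∫ t, -2 * (∑ r, c r * Q r t) ^ 2 := by
        simp only [sum_sum_mul_mul_sq_sub hc]
    _ ≤ 0 := integral_nonpos fun t => by
        simpa using sq_nonneg (∑ r, c r * Q r t)

theorem stmt8 (N : ℕ) (hN : 1 ≤ N)
    (n : Fin N → ℕ) (hn : ∀ r, 1 ≤ n r)
    (a : (r : Fin N) → Fin (n r) → ℝ) (ha : ∀ r, IsProbVec (a r))
    (x : (r : Fin N) → Fin (n r) → ℝ)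
    (W2sq : Fin N → Fin N → ℝ)
    (hW : ∀ r s, W2sq r s =
      sInf ((fun P => ∑ i, ∑ j, P i j * (x r i - x s j) ^ 2) ''
        transportPolytope (a r) (a s)))
    (c : Fin N → ℝ) (hc : ∑ r, c r = 0) :
    ∑ r, ∑ s, c r * c s * W2sq r s ≤ 0 :=
  stmt8_general N n a ha x W2sq hW c hc
end

section
/- Let N ≥ 1 and let D ∈ ℝ^{N×N} be symmetric with zero diagonal and conditionally negative definite, i.e. ∑_{i,j} c_i c_j D_{ij} ≤ 0 for every c ∈ ℝ^N with ∑_i c_i = 0. For probability vectors a, b ∈ ℝ^N define the energy distance E(a,b) := 2 ∑_{i,j} a_i b_j D_{ij} − ∑_{i,j} a_i a_j D_{ij} − ∑_{i,j} b_i b_j D_{ij}. Then the square root of E satisfies the triangle inequality: for all probability vectors a, b, c ∈ ℝ^N, √E(a,c) ≤ √E(a,b) + √E(b,c). -/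
open Finset

theorem stmt10 (N : ℕ) (hN : 1 ≤ N)
    (D : Fin N → Fin N → ℝ)
    (hsymm : ∀ i j, D i j = D j i) (hdiag : ∀ i, D i i = 0)
    (hcnd : ∀ c : Fin N → ℝ, ∑ i, c i = 0 → ∑ i, ∑ j, c i * c j * D i j ≤ 0)
    (E : (Fin N → ℝ) → (Fin N → ℝ) → ℝ)
    (hE : ∀ a b : Fin N → ℝ, E a b =
      2 * ∑ i, ∑ j, a i * b j * D i j
        - ∑ i, ∑ j, a i * a j * D i j - ∑ i, ∑ j, b i * b j * D i j)
    (a b c : Fin N → ℝ) (ha : IsProbVec a) (hb : IsProbVec b) (hc : IsProbVec c) :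
    Real.sqrt (E a c) ≤ Real.sqrt (E a b) + Real.sqrt (E b c) := by
  classical
  set S : (Fin N → ℝ) → (Fin N → ℝ) → ℝ :=
    fun x y => ∑ i, ∑ j, x i * y j * D i j with hS
  have Ssymm : ∀ x y, S x y = S y x := by
    intro x y
    simp only [hS]
    rw [Finset.sum_comm]
    refine Finset.sum_congr rfl fun i _ => Finset.sum_congr rfl fun j _ => ?_
    rw [hsymm]; ring
  have Sexpand : ∀ (x y : Fin N → ℝ) (t : ℝ),
      S (fun i => x i + t * y i) (fun i => x i + t * y i)
        = S x x + 2 * t * S x y + t ^ 2 * S y y := by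
    intro x y t
    simp only [hS]
    have key : ∀ i j : Fin N, (x i + t * y i) * (x j + t * y j) * D i j
        = x i * x j * D i j + t * (x i * y j * D i j) + t * (y i * x j * D i j)
          + t ^ 2 * (y i * y j * D i j) := by intro i j; ring
    simp_rw [key, Finset.sum_add_distrib, ← Finset.mul_sum]
    have : (∑ i, ∑ j, y i * x j * D i j) = ∑ i, ∑ j, x i * y j * D i j := by
      have := Ssymm y x
      simpa [hS] using this
    rw [this]; ring
  set u : Fin N → ℝ := fun i => a i - b i with hu
  set v : Fin N → ℝ := fun i => b i - c i with hv
  have hu0 : ∑ i, u i = 0 := by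
    simp [hu, Finset.sum_sub_distrib, ha.2, hb.2]
  have hv0 : ∑ i, v i = 0 := by
    simp [hv, Finset.sum_sub_distrib, hb.2, hc.2]
  have hSuu : S u u ≤ 0 := hcnd u hu0
  have hSvv : S v v ≤ 0 := hcnd v hv0
  set P : ℝ := -S u u with hPdef
  set R : ℝ := -S v v with hRdef
  set M : ℝ := -S u v with hMdef
  have hP : 0 ≤ P := by simp [hPdef]; linarith
  have hR : 0 ≤ R := by simp [hRdef]; linarith
  -- express E in terms of S
  have hsub : ∀ x y : Fin N → ℝ,
      S (fun i => x i - y i) (fun i => x i - y i) = S x x - 2 * S x y + S y y := by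
    intro x y
    have h1 : (fun i => x i - y i) = fun i => x i + (-1 : ℝ) * y i := by
      funext i; ring
    rw [h1, Sexpand]; ring
  have hEab : E a b = P := by
    rw [hE, hPdef, hu]
    have := hsub a b
    simp only [hS] at this ⊢
    linarith
  have hEbc : E b c = R := by
    rw [hE, hRdef, hv]
    have := hsub b c
    simp only [hS] at this ⊢
    linarith
  have hEac : E a c = P + 2 * M + R := by
    have hw : (fun i => a i - c i) = fun i => u i + 1 * v i := by
      funext i; simp only [hu, hv]; ring
    have h1 : S (fun i => a i - c i) (fun i => a i - c i)
        = S u u + 2 * S u v + S v v := by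
      rw [hw, Sexpand]; ring
    have h2 := hsub a c
    rw [hE]
    simp only [hS] at h1 h2 ⊢
    rw [hPdef, hMdef, hRdef]
    simp only [hS]
    linarith
  -- Cauchy–Schwarz via discriminant
  have hquad : ∀ t : ℝ, 0 ≤ R * (t * t) + (2 * M) * t + P := by
    intro t
    have h0 : ∑ i, (u i + t * v i) = 0 := by
      rw [Finset.sum_add_distrib, ← Finset.mul_sum, hu0, hv0]; ring
    have h1 := hcnd (fun i => u i + t * v i) h0
    have h2 := Sexpand u v t
    simp only [hS] at h1 h2
    rw [hPdef, hMdef, hRdef]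
    simp only [hS]
    nlinarith [h1, h2]
  have hdisc := discrim_le_zero hquad
  rw [discrim] at hdisc
  have hM2 : M ^ 2 ≤ P * R := by nlinarith
  have hMle : M ≤ Real.sqrt P * Real.sqrt R := by
    calc M ≤ |M| := le_abs_self _
      _ = Real.sqrt (M ^ 2) := (Real.sqrt_sq_eq_abs M).symm
      _ ≤ Real.sqrt (P * R) := Real.sqrt_le_sqrt hM2
      _ = Real.sqrt P * Real.sqrt R := Real.sqrt_mul hP R
  have hfin : E a c ≤ (Real.sqrt P + Real.sqrt R) ^ 2 := by
    rw [hEac]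
    have h1 : Real.sqrt P ^ 2 = P := Real.sq_sqrt hP
    have h2 : Real.sqrt R ^ 2 = R := Real.sq_sqrt hR
    nlinarith
  calc Real.sqrt (E a c) ≤ Real.sqrt ((Real.sqrt P + Real.sqrt R) ^ 2) :=
        Real.sqrt_le_sqrt hfin
    _ = Real.sqrt P + Real.sqrt R := by
        rw [Real.sqrt_sq (by positivity)]
    _ = Real.sqrt (E a b) + Real.sqrt (E b c) := by rw [hEab, hEbc]
end
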